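/- arXiv:0906.4770 — 4 statements merged into one kernel-verified Lean document; each statement's English description precedes it below -/
import Mathlib

section
/- There exists a constant C < ∞ such that for all 0 < δ < 1 and all h ∈ ℝ: sup_{δ≤r≤1} p_r(0) ≤ C·max(ψ⁻¹(1/δ), 1), sup_{δ≤r≤1} |Δ^h p_r(0)| ≤ C·h²/δ³, and sup_{δ≤r≤1} |Δ^hΔ^{−h} p_r(0)| ≤ C·h²/δ³. -/
/-!
Regular variation with index `β > 1` makes `ψ` at least double when its argument doubles, beyond
some `x₀`; the bound on the logarithmic derivative controls `ψ` inside each dyadic block.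
Together they give the Potter-type bound `(p / x) ψ(x) ≤ 2 e^{D₁} ψ(p)` for `x₀ ≤ x ≤ p`, in
particular `ψ(p) ≥ c p`. With `T = ψ⁻¹(1/δ)` this bounds `π p_r(0) = ∫ e^{-rψ}` by
`T + ∫_T^∞ e^{-p/(2e^{D₁}T)} dp`. Since `1 - cos(ph) ≤ p²h²/2`, both differences are controlled
by the second moment `∫ p² e^{-rψ(p)} dp ≤ x₀³ + 2/(cδ)³`; the symmetric one is twice the first
because `p_r` is even.
-/

noncomputable def pdens (ψ : ℝ → ℝ) (s x : ℝ) : ℝ :=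
  (1 / Real.pi) * ∫ p in Set.Ioi (0:ℝ), Real.cos (p * x) * Real.exp (-s * ψ p)

noncomputable def psiInv (ψ : ℝ → ℝ) (u : ℝ) : ℝ :=
  sInf {l : ℝ | 0 < l ∧ u ≤ ψ l}

open Real MeasureTheory Set Filter
open scoped Nat

section Growth

variable {ψ : ℝ → ℝ} {D₁ x₀ : ℝ}

lemma le_exp_mul_of_le_of_le_two_mul (hpos : ∀ x, 1 ≤ x → 0 < ψ x)
    (hdiff : ∀ x, 1 ≤ x → DifferentiableAt ℝ ψ x)
    (hD₁ : ∀ x, 1 ≤ x → x * |deriv ψ x| ≤ D₁ * ψ x)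
    {a b : ℝ} (ha : 1 ≤ a) (hab : a ≤ b) (hb : b ≤ 2 * a) :
    ψ a ≤ exp D₁ * ψ b := by
  have hlog : ∀ x ∈ Icc a b,
      HasDerivWithinAt (fun y => log (ψ y)) (deriv ψ x / ψ x) (Icc a b) x := fun x hx =>
    ((hdiff x (ha.trans hx.1)).hasDerivAt.log (hpos x (ha.trans hx.1)).ne').hasDerivWithinAt
  have hbound : ∀ x ∈ Icc a b, ‖deriv ψ x / ψ x‖ ≤ D₁ / a := by
    intro x hx
    have hψx := hpos x (ha.trans hx.1)
    rw [norm_div, norm_of_nonneg hψx.le, div_le_div_iff₀ hψx (by linarith), Real.norm_eq_abs]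
    nlinarith [abs_nonneg (deriv ψ x), hD₁ x (ha.trans hx.1), hx.1]
  have hmvt := (convex_Icc a b).norm_image_sub_le_of_norm_hasDerivWithin_le hlog hbound
    (right_mem_Icc.2 hab) (left_mem_Icc.2 hab)
  have hD₁a : 0 ≤ D₁ / a := (norm_nonneg _).trans (hbound a (left_mem_Icc.2 hab))
  have hlog_le : log (ψ a) - log (ψ b) ≤ D₁ := by
    rw [Real.norm_eq_abs, Real.norm_eq_abs, abs_sub_comm a b, abs_of_nonneg (sub_nonneg.2 hab)]
      at hmvt
    calc log (ψ a) - log (ψ b) ≤ |log (ψ a) - log (ψ b)| := le_abs_self _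
      _ ≤ D₁ / a * (b - a) := hmvt
      _ ≤ D₁ / a * a := by gcongr; linarith
      _ = D₁ := div_mul_cancel₀ _ (by positivity)
  calc ψ a = exp (log (ψ a)) := (exp_log (hpos a ha)).symm
    _ ≤ exp (D₁ + log (ψ b)) := exp_le_exp.2 (by linarith)
    _ = exp D₁ * ψ b := by rw [exp_add, exp_log (hpos b (by linarith))]

lemma eventually_two_mul_le_of_tendsto {β : ℝ} (hβ : 1 < β)
    (hRV : Tendsto (fun x => ψ (2 * x) / ψ x) atTop (nhds (2 ^ β)))
    (hpos : ∀ x, 1 ≤ x → 0 < ψ x) :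
    ∀ᶠ x in atTop, 2 * ψ x ≤ ψ (2 * x) := by
  have h2β : (2 : ℝ) < 2 ^ β := by
    simpa using rpow_lt_rpow_of_exponent_lt one_lt_two hβ
  filter_upwards [hRV.eventually (eventually_ge_nhds h2β), eventually_ge_atTop 1] with x hx hx1
  rw [le_div_iff₀ (hpos x hx1)] at hx
  linarith

lemma two_pow_mul_le_of_doubling (hx₀ : 0 ≤ x₀)
    (hdouble : ∀ x, x₀ ≤ x → 2 * ψ x ≤ ψ (2 * x)) (n : ℕ) {x : ℝ} (hx : x₀ ≤ x) :
    2 ^ n * ψ x ≤ ψ (2 ^ n * x) := by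
  induction n with
  | zero => simp
  | succ n ih =>
    have hle : x₀ ≤ 2 ^ n * x :=
      hx.trans (le_mul_of_one_le_left (hx₀.trans hx) (one_le_pow₀ one_le_two))
    calc 2 ^ (n + 1) * ψ x = 2 * (2 ^ n * ψ x) := by ring
      _ ≤ 2 * ψ (2 ^ n * x) := by gcongr
      _ ≤ ψ (2 * (2 ^ n * x)) := hdouble _ hle
      _ = ψ (2 ^ (n + 1) * x) := by ring_nf

lemma div_mul_le_of_doubling (hpos : ∀ x, 1 ≤ x → 0 < ψ x)
    (hdiff : ∀ x, 1 ≤ x → DifferentiableAt ℝ ψ x)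
    (hD₁ : ∀ x, 1 ≤ x → x * |deriv ψ x| ≤ D₁ * ψ x) (hx₀ : 1 ≤ x₀)
    (hdouble : ∀ x, x₀ ≤ x → 2 * ψ x ≤ ψ (2 * x)) {x p : ℝ} (hx : x₀ ≤ x) (hxp : x ≤ p) :
    p / x * ψ x ≤ 2 * exp D₁ * ψ p := by
  have hx0 : 0 < x := by linarith
  obtain ⟨n, hn, hn'⟩ := exists_nat_pow_near ((one_le_div hx0).2 hxp) one_lt_two
  rw [le_div_iff₀ hx0] at hn
  rw [div_lt_iff₀ hx0, pow_succ'] at hn'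
  calc p / x * ψ x ≤ 2 * 2 ^ n * ψ x := by
        gcongr
        · exact (hpos x (by linarith)).le
        · rw [div_le_iff₀ hx0]; exact hn'.le
    _ ≤ 2 * ψ (2 ^ n * x) := by
        rw [mul_assoc]
        gcongr 2 * ?_
        exact two_pow_mul_le_of_doubling (by linarith) hdouble n hx
    _ ≤ 2 * (exp D₁ * ψ p) := mul_le_mul_of_nonneg_left
        (le_exp_mul_of_le_of_le_two_mul hpos hdiff hD₁
          (one_le_mul_of_one_le_of_one_le (one_le_pow₀ one_le_two) (by linarith)) hn
          (by linarith))
        two_pos.le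
    _ = 2 * exp D₁ * ψ p := by ring

lemma exists_pos_mul_le_of_potter {E : ℝ} (hx₀ : 0 < x₀) (hψx₀ : 0 < ψ x₀) (hE : 0 < E)
    (hpotter : ∀ x p, x₀ ≤ x → x ≤ p → p / x * ψ x ≤ E * ψ p) :
    ∃ c > 0, ∀ p, x₀ ≤ p → c * p ≤ ψ p := by
  refine ⟨ψ x₀ / (E * x₀), by positivity, fun p hp => ?_⟩
  have := hpotter x₀ p le_rfl hp
  rw [div_mul_eq_mul_div, div_le_iff₀ hx₀] at this
  rw [div_mul_eq_mul_div, div_le_iff₀ (by positivity)]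
  linarith

end Growth

lemma setIntegral_Ioi_zero_le_of_le {f g : ℝ → ℝ} {a T : ℝ} (hT : 0 ≤ T)
    (hf : IntegrableOn f (Ioi 0)) (hg : IntegrableOn g (Ioi 0)) (hg0 : ∀ p, 0 < p → 0 ≤ g p)
    (hfa : ∀ p ∈ Ioc 0 T, f p ≤ a) (hfg : ∀ p, T < p → f p ≤ g p) :
    ∫ p in Ioi 0, f p ≤ a * T + ∫ p in Ioi 0, g p := by
  have hsplit := setIntegral_union (Ioc_disjoint_Ioi le_rfl) measurableSet_Ioi
    (hf.mono_set Ioc_subset_Ioi_self) (hf.mono_set (Ioi_subset_Ioi hT))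
  rw [Ioc_union_Ioi_eq_Ioi hT] at hsplit
  have hnear : ∫ p in Ioc 0 T, f p ≤ a * T := by
    calc ∫ p in Ioc 0 T, f p ≤ ∫ _ in Ioc 0 T, a :=
          setIntegral_mono_on (hf.mono_set Ioc_subset_Ioi_self)
            (integrableOn_const measure_Ioc_lt_top.ne) measurableSet_Ioc hfa
      _ = a * T := by
          rw [setIntegral_const, volume_real_Ioc_of_le hT, smul_eq_mul, sub_zero, mul_comm]
  have hfar : ∫ p in Ioi T, f p ≤ ∫ p in Ioi 0, g p :=
    (setIntegral_mono_on (hf.mono_set (Ioi_subset_Ioi hT)) (hg.mono_set (Ioi_subset_Ioi hT))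
      measurableSet_Ioi fun p hp => hfg p hp).trans
    (setIntegral_mono_set hg ((ae_restrict_iff' measurableSet_Ioi).2 (.of_forall hg0))
      (Ioi_subset_Ioi hT).eventuallyLE)
  linarith

lemma integrableOn_pow_mul_exp_neg_mul (n : ℕ) {b : ℝ} (hb : 0 < b) :
    IntegrableOn (fun p : ℝ => p ^ n * exp (-(b * p))) (Ioi 0) := by
  refine (integrableOn_rpow_mul_exp_neg_mul_rpow (p := 1) (s := n)
    (by linarith [n.cast_nonneg (α := ℝ)]) one_pos hb).congr_fun (fun p _ => ?_) measurableSet_Ioi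
  simp [rpow_natCast]

lemma integral_pow_mul_exp_neg_mul (n : ℕ) {b : ℝ} (hb : 0 < b) :
    ∫ p in Ioi 0, p ^ n * exp (-(b * p)) = n ! / b ^ (n + 1) := by
  have := integral_rpow_mul_exp_neg_mul_Ioi (a := n + 1) (by positivity) hb
  rw [add_sub_cancel_right, Gamma_nat_eq_factorial] at this
  simp_rw [rpow_natCast] at this
  rw [this, ← Nat.cast_succ, rpow_natCast, div_pow, one_pow, one_div_mul_eq_div]

section Moments

variable {ψ : ℝ → ℝ} {x₀ c : ℝ}

lemma pow_mul_exp_neg_mul_le_pow (hnonneg : ∀ p, 0 ≤ ψ p) (n : ℕ) {s p : ℝ} (hs : 0 < s)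
    (hp : 0 ≤ p) (hpx : p ≤ x₀) : p ^ n * exp (-s * ψ p) ≤ x₀ ^ n :=
  calc p ^ n * exp (-s * ψ p) ≤ p ^ n * 1 := by
        gcongr; exact exp_le_one_iff.2 (by nlinarith [hnonneg p])
    _ ≤ x₀ ^ n := by rw [mul_one]; gcongr

lemma integrableOn_pow_mul_exp_neg_mul_of_linear_growth (hψ : Measurable ψ)
    (hnonneg : ∀ p, 0 ≤ ψ p) (hx₀ : 0 ≤ x₀) (hc : 0 < c) (hlin : ∀ p, x₀ ≤ p → c * p ≤ ψ p)
    (n : ℕ) {s : ℝ} (hs : 0 < s) : IntegrableOn (fun p => p ^ n * exp (-s * ψ p)) (Ioi 0) := by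
  have hmeas : Measurable fun p => p ^ n * exp (-s * ψ p) := by fun_prop
  rw [← Ioc_union_Ioi_eq_Ioi hx₀, integrableOn_union]
  constructor
  · refine Measure.integrableOn_of_bounded (M := x₀ ^ n) measure_Ioc_lt_top.ne
      hmeas.aestronglyMeasurable ((ae_restrict_iff' measurableSet_Ioc).2 (.of_forall ?_))
    rintro p ⟨hp0, hpx⟩
    rw [norm_of_nonneg (by positivity)]
    exact pow_mul_exp_neg_mul_le_pow hnonneg n hs hp0.le hpx
  · refine ((integrableOn_pow_mul_exp_neg_mul n (mul_pos hs hc)).mono_set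
      (Ioi_subset_Ioi hx₀)).mono' hmeas.aestronglyMeasurable
      ((ae_restrict_iff' measurableSet_Ioi).2 (.of_forall fun p (hxp : x₀ < p) => ?_))
    have hp : 0 < p := hx₀.trans_lt hxp
    rw [norm_of_nonneg (by positivity)]
    gcongr
    nlinarith [hlin p hxp.le]

lemma integral_pow_mul_exp_neg_mul_le_of_linear_growth (hψ : Measurable ψ)
    (hnonneg : ∀ p, 0 ≤ ψ p) (hx₀ : 0 ≤ x₀) (hc : 0 < c) (hlin : ∀ p, x₀ ≤ p → c * p ≤ ψ p)
    (n : ℕ) {δ s : ℝ} (hδ : 0 < δ) (hδ1 : δ ≤ 1) (hδs : δ ≤ s) :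
    ∫ p in Ioi 0, p ^ n * exp (-s * ψ p) ≤
      (x₀ ^ (n + 1) + n ! / c ^ (n + 1)) / δ ^ (n + 1) := by
  have hs : 0 < s := hδ.trans_le hδs
  have hbound := setIntegral_Ioi_zero_le_of_le (a := x₀ ^ n) hx₀
    (integrableOn_pow_mul_exp_neg_mul_of_linear_growth hψ hnonneg hx₀ hc hlin n hs)
    (integrableOn_pow_mul_exp_neg_mul n (mul_pos hδ hc)) (fun p hp => by positivity)
    (fun p hp => pow_mul_exp_neg_mul_le_pow hnonneg n hs hp.1.le hp.2) (fun p hxp => ?_)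
  · rw [integral_pow_mul_exp_neg_mul n (mul_pos hδ hc)] at hbound
    calc _ ≤ x₀ ^ n * x₀ + n ! / (δ * c) ^ (n + 1) := hbound
      _ = x₀ ^ (n + 1) + n ! / c ^ (n + 1) / δ ^ (n + 1) := by
          rw [← pow_succ, mul_pow, div_div, mul_comm (δ ^ (n + 1))]
      _ ≤ x₀ ^ (n + 1) / δ ^ (n + 1) + n ! / c ^ (n + 1) / δ ^ (n + 1) := by
          gcongr
          exact le_div_self (by positivity) (by positivity) (pow_le_one₀ hδ.le hδ1)
      _ = _ := (add_div _ _ _).symm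
  · have hp : 0 < p := hx₀.trans_lt hxp
    gcongr
    nlinarith [hlin p hxp.le, hnonneg p]

end Moments

lemma pdens_zero (ψ : ℝ → ℝ) (s : ℝ) :
    pdens ψ s 0 = 1 / π * ∫ p in Ioi 0, exp (-s * ψ p) := by
  simp [pdens]

lemma pdens_neg (ψ : ℝ → ℝ) (s x : ℝ) : pdens ψ s (-x) = pdens ψ s x := by
  simp [pdens]

lemma abs_pdens_sub_pdens_zero_le {ψ : ℝ → ℝ} (hψ : Measurable ψ) {s : ℝ}
    (hint : IntegrableOn (fun p => exp (-s * ψ p)) (Ioi 0))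
    (hint₂ : IntegrableOn (fun p => p ^ 2 * exp (-s * ψ p)) (Ioi 0)) (x : ℝ) :
    |pdens ψ s x - pdens ψ s 0| ≤ x ^ 2 / (2 * π) * ∫ p in Ioi 0, p ^ 2 * exp (-s * ψ p) := by
  have hint_cos : IntegrableOn (fun p => cos (p * x) * exp (-s * ψ p)) (Ioi 0) :=
    hint.mono' (by fun_prop) (.of_forall fun p => by
      rw [norm_mul, norm_of_nonneg (exp_pos _).le]
      exact mul_le_of_le_one_left (exp_pos _).le (abs_cos_le_one _))
  have hsub : pdens ψ s x - pdens ψ s 0 =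
      1 / π * ∫ p in Ioi 0, (cos (p * x) - 1) * exp (-s * ψ p) := by
    simp_rw [pdens_zero, pdens, sub_mul, one_mul, integral_sub hint_cos hint, mul_sub]
  have hcos : ∀ p : ℝ,
      ‖(cos (p * x) - 1) * exp (-s * ψ p)‖ ≤ x ^ 2 / 2 * (p ^ 2 * exp (-s * ψ p)) := by
    intro p
    rw [norm_mul, norm_of_nonneg (exp_pos _).le, Real.norm_eq_abs, abs_sub_comm,
      abs_of_nonneg (sub_nonneg.2 (cos_le_one _)), ← mul_assoc]
    gcongr
    nlinarith [one_sub_sq_div_two_le_cos (x := p * x)]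
  rw [hsub, abs_mul, abs_of_pos (by positivity)]
  calc 1 / π * |∫ p in Ioi 0, (cos (p * x) - 1) * exp (-s * ψ p)|
      ≤ 1 / π * ∫ p in Ioi 0, x ^ 2 / 2 * (p ^ 2 * exp (-s * ψ p)) := by
        gcongr
        exact norm_integral_le_of_norm_le (hint₂.const_mul _) (.of_forall hcos)
    _ = x ^ 2 / (2 * π) * ∫ p in Ioi 0, p ^ 2 * exp (-s * ψ p) := by
        rw [integral_const_mul]; ring

lemma two_mul_abs_pdens_sub_pdens_zero_le {ψ : ℝ → ℝ} (hψ : Measurable ψ) {s M : ℝ}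
    (hint : IntegrableOn (fun p => exp (-s * ψ p)) (Ioi 0))
    (hint₂ : IntegrableOn (fun p => p ^ 2 * exp (-s * ψ p)) (Ioi 0))
    (hM : ∫ p in Ioi 0, p ^ 2 * exp (-s * ψ p) ≤ M) (x : ℝ) :
    2 * |pdens ψ s x - pdens ψ s 0| ≤ M * x ^ 2 := by
  have hM0 : 0 ≤ M := (setIntegral_nonneg measurableSet_Ioi fun p _ => by positivity).trans hM
  calc 2 * |pdens ψ s x - pdens ψ s 0|
      ≤ 2 * (x ^ 2 / (2 * π) * ∫ p in Ioi 0, p ^ 2 * exp (-s * ψ p)) := by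
        gcongr; exact abs_pdens_sub_pdens_zero_le hψ hint hint₂ x
    _ ≤ 2 * (x ^ 2 / (2 * π) * M) := by gcongr
    _ = 1 / π * (M * x ^ 2) := by field_simp
    _ ≤ 1 * (M * x ^ 2) := by
        gcongr; rw [div_le_one pi_pos]; linarith [pi_gt_three]
    _ = M * x ^ 2 := one_mul _

lemma psiInv_spec {ψ : ℝ → ℝ} {u x₀ : ℝ} (hcont : ContinuousOn ψ (Ici x₀))
    (hsmall : ∀ l, 0 < l → l < x₀ → ψ l < u) (hne : ∃ l, 0 < l ∧ u ≤ ψ l) :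
    x₀ ≤ psiInv ψ u ∧ u ≤ ψ (psiInv ψ u) := by
  set S := {l : ℝ | 0 < l ∧ u ≤ ψ l}
  have hS : S ⊆ Ici x₀ ∩ ψ ⁻¹' Ici u := fun l ⟨hl0, hlu⟩ =>
    ⟨not_lt.1 fun hlx => (hsmall l hl0 hlx).not_ge hlu, hlu⟩
  exact (hcont.preimage_isClosed_of_isClosed isClosed_Ici isClosed_Ici).closure_subset_iff.2 hS
    (csInf_mem_closure hne ⟨0, fun l hl => hl.1.le⟩)

lemma integral_exp_neg_mul_le_of_potter {ψ : ℝ → ℝ} (hnonneg : ∀ p, 0 ≤ ψ p) {E x₀ T δ s : ℝ}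
    (hE : 0 < E) (hpotter : ∀ x p, x₀ ≤ x → x ≤ p → p / x * ψ x ≤ E * ψ p)
    (hT0 : 0 < T) (hT : x₀ ≤ T) (hψT : 1 ≤ δ * ψ T) (hδs : δ ≤ s)
    (hint : IntegrableOn (fun p => exp (-s * ψ p)) (Ioi 0)) :
    ∫ p in Ioi 0, exp (-s * ψ p) ≤ (1 + E) * T := by
  have hb : 0 < 1 / (E * T) := by positivity
  have hδ : 0 ≤ δ := by
    by_contra! hδ; nlinarith [hnonneg T]
  have hbound := setIntegral_Ioi_zero_le_of_le (a := 1) hT0.le hint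
    (integrableOn_pow_mul_exp_neg_mul 0 hb) (fun p hp => by positivity)
    (fun p _ => exp_le_one_iff.2 (by nlinarith [hnonneg p])) (fun p hTp => ?_)
  · rw [integral_pow_mul_exp_neg_mul 0 hb] at hbound
    calc _ ≤ 1 * T + 1 / (1 / (E * T)) := by simpa using hbound
      _ = (1 + E) * T := by field_simp
  · have hp := hpotter T p hT hTp.le
    have hpT : 0 ≤ p / T := by have := hT0.trans hTp; positivity
    rw [pow_zero, one_mul, exp_le_exp, neg_mul, neg_le_neg_iff, div_mul_eq_mul_div, one_mul,
      div_le_iff₀ (by positivity)]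
    calc p = p / T * 1 * T := by field_simp
      _ ≤ p / T * (δ * ψ T) * T := by gcongr
      _ = δ * (p / T * ψ T) * T := by ring
      _ ≤ δ * (E * ψ p) * T := by gcongr
      _ = δ * ψ p * (E * T) := by ring
      _ ≤ s * ψ p * (E * T) := by gcongr; exact hnonneg p

lemma exists_pdens_zero_le {ψ : ℝ → ℝ} (hψ : Measurable ψ) (hnonneg : ∀ p, 0 ≤ ψ p)
    {x₀ c E C₀ : ℝ} (hx₀ : 0 < x₀) (hc : 0 < c) (hE : 0 < E)
    (hlin : ∀ p, x₀ ≤ p → c * p ≤ ψ p)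
    (hpotter : ∀ x p, x₀ ≤ x → x ≤ p → p / x * ψ x ≤ E * ψ p)
    (hcont : ContinuousOn ψ (Ici x₀)) (hC₀ : ∀ p, ψ p ≤ C₀ * p ^ 2) :
    ∃ C, ∀ δ r, 0 < δ → δ ≤ r → pdens ψ r 0 ≤ C * max (psiInv ψ (1 / δ)) 1 := by
  have hint : ∀ s, 0 < s → IntegrableOn (fun p => exp (-s * ψ p)) (Ioi 0) := fun s hs => by
    simpa using integrableOn_pow_mul_exp_neg_mul_of_linear_growth hψ hnonneg hx₀.le hc hlin 0 hs
  set M := C₀ * x₀ ^ 2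
  set K := ∫ p in Ioi 0, exp (-(1 / M) * ψ p)
  have hK : 0 ≤ K := setIntegral_nonneg measurableSet_Ioi fun p _ => (exp_pos _).le
  refine ⟨(K + 1 + E) / π, fun δ r hδ hδr => ?_⟩
  have hr : 0 < r := hδ.trans_le hδr
  rw [pdens_zero]
  -- Once `1 / δ > C₀ x₀² ≥ ψ` on `(0, x₀)`, the level `1 / δ` is first reached beyond `x₀`, where
  -- the Potter bound applies; below that threshold `δ ≥ 1 / (C₀ x₀²)` is bounded away from `0`.
  rcases le_or_gt (1 / δ) M with hδM | hδM
  · have hM : 0 < M := (one_div_pos.2 hδ).trans_le hδM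
    have hMr : 1 / M ≤ r := by
      rw [div_le_iff₀ hδ] at hδM
      rw [div_le_iff₀ hM]
      nlinarith
    calc 1 / π * ∫ p in Ioi 0, exp (-r * ψ p) ≤ 1 / π * K := by
          gcongr
          refine setIntegral_mono_on (hint r hr) (hint _ (by positivity)) measurableSet_Ioi
            fun p _ => ?_
          gcongr
          exact hnonneg p
      _ ≤ (K + 1 + E) / π * 1 := by
          rw [mul_one, one_div_mul_eq_div]; gcongr; linarith
      _ ≤ (K + 1 + E) / π * max (psiInv ψ (1 / δ)) 1 := by
          gcongr; exact le_max_right _ _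
  · have hC₀0 : 0 ≤ C₀ := by simpa using (hnonneg 1).trans (hC₀ 1)
    have hsmall : ∀ l, 0 < l → l < x₀ → ψ l < 1 / δ := fun l hl0 hlx =>
      (hC₀ l).trans_lt (lt_of_le_of_lt (by show C₀ * l ^ 2 ≤ C₀ * x₀ ^ 2; gcongr) hδM)
    have hlarge : ∃ l, 0 < l ∧ 1 / δ ≤ ψ l := by
      refine ⟨max x₀ (1 / (δ * c)), hx₀.trans_le (le_max_left _ _), ?_⟩
      calc 1 / δ = c * (1 / (δ * c)) := by field_simp
        _ ≤ c * max x₀ (1 / (δ * c)) := by gcongr; exact le_max_right _ _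
        _ ≤ ψ (max x₀ (1 / (δ * c))) := hlin _ (le_max_left _ _)
    obtain ⟨hT, hψT⟩ := psiInv_spec hcont hsmall hlarge
    set T := psiInv ψ (1 / δ)
    have hT0 : 0 < T := hx₀.trans_le hT
    have hδT : 1 ≤ δ * ψ T := by rwa [div_le_iff₀ hδ, mul_comm] at hψT
    calc 1 / π * ∫ p in Ioi 0, exp (-r * ψ p) ≤ 1 / π * ((1 + E) * T) := by
          gcongr
          exact integral_exp_neg_mul_le_of_potter hnonneg hE hpotter hT0 hT hδT hδr (hint r hr)
      _ ≤ (K + 1 + E) / π * max T 1 := by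
          rw [← mul_assoc, one_div_mul_eq_div]
          gcongr
          · linarith
          · exact le_max_left _ _

theorem stmt_13_general
    (β : ℝ) (hβ1 : 1 < β)
    (ψ : ℝ → ℝ)
    (hmeas : Measurable ψ)
    (hnonneg : ∀ p : ℝ, 0 ≤ ψ p)
    (hpos : ∀ p : ℝ, p ≠ 0 → 0 < ψ p)
    (hRV : ∀ l : ℝ, 0 < l →
      Filter.Tendsto (fun x => ψ (l * x) / ψ x) Filter.atTop (nhds (l ^ β)))
    (hdiff1 : ∀ p : ℝ, 0 < p → DifferentiableAt ℝ ψ p)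
    (D₁ : ℝ)
    (hD1 : ∀ l : ℝ, 1 ≤ l → l * |deriv ψ l| ≤ D₁ * ψ l)
    (C₀ : ℝ) (hC0 : ∀ p : ℝ, ψ p ≤ C₀ * p ^ 2) :
    ∃ C : ℝ, ∀ δ : ℝ, 0 < δ → δ < 1 → ∀ h : ℝ, ∀ r : ℝ, δ ≤ r → r ≤ 1 →
      pdens ψ r 0 ≤ C * max (psiInv ψ (1 / δ)) 1 ∧
      |pdens ψ r (0 + h) - pdens ψ r 0| ≤ C * h ^ 2 / δ ^ 3 ∧
      |2 * pdens ψ r 0 - pdens ψ r (0 + h) - pdens ψ r (0 - h)| ≤ C * h ^ 2 / δ ^ 3 := by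
  have hpos₁ : ∀ x : ℝ, 1 ≤ x → 0 < ψ x := fun x hx => hpos x (by positivity)
  have hdiff₁ : ∀ x : ℝ, 1 ≤ x → DifferentiableAt ℝ ψ x := fun x hx => hdiff1 x (by positivity)
  obtain ⟨x₀, hx₀⟩ := eventually_atTop.1
    ((eventually_two_mul_le_of_tendsto hβ1 (hRV 2 two_pos) hpos₁).and (eventually_ge_atTop 1))
  have hx₀1 : 1 ≤ x₀ := (hx₀ x₀ le_rfl).2
  have hpotter : ∀ x p, x₀ ≤ x → x ≤ p → p / x * ψ x ≤ 2 * exp D₁ * ψ p := fun x p =>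
    div_mul_le_of_doubling hpos₁ hdiff₁ hD1 hx₀1 fun x hx => (hx₀ x hx).1
  obtain ⟨c, hc, hlin⟩ :=
    exists_pos_mul_le_of_potter (by positivity) (hpos₁ x₀ hx₀1) (by positivity) hpotter
  obtain ⟨C₁, hC₁⟩ := exists_pdens_zero_le hmeas hnonneg (by positivity) hc (by positivity) hlin
    hpotter (fun x hx => (hdiff₁ x (hx₀1.trans hx)).continuousAt.continuousWithinAt) hC0
  set K := x₀ ^ 3 + 2 / c ^ 3
  refine ⟨max C₁ K, fun δ hδ hδ1 h r hδr _ => ?_⟩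
  have hx₀ : 0 ≤ x₀ := by positivity
  have hr : 0 < r := hδ.trans_le hδr
  have hmoment : ∫ p in Ioi 0, p ^ 2 * exp (-r * ψ p) ≤ K / δ ^ 3 := by
    simpa using integral_pow_mul_exp_neg_mul_le_of_linear_growth hmeas hnonneg hx₀ hc hlin 2 hδ
      hδ1.le hδr
  have h2Δ : 2 * |pdens ψ r h - pdens ψ r 0| ≤ max C₁ K * h ^ 2 / δ ^ 3 := by
    refine (two_mul_abs_pdens_sub_pdens_zero_le hmeas
      (by simpa using
        integrableOn_pow_mul_exp_neg_mul_of_linear_growth hmeas hnonneg hx₀ hc hlin 0 hr)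
      (integrableOn_pow_mul_exp_neg_mul_of_linear_growth hmeas hnonneg hx₀ hc hlin 2 hr)
      hmoment h).trans ?_
    rw [div_mul_eq_mul_div]
    gcongr
    exact le_max_right _ _
  refine ⟨(hC₁ δ r hδ hδr).trans ?_, ?_, ?_⟩
  · gcongr
    exact le_max_left _ _
  · rw [zero_add]
    exact (le_mul_of_one_le_left (abs_nonneg _) one_le_two).trans h2Δ
  · have hsym : ∀ a b : ℝ, 2 * a - b - b = -(2 * (b - a)) := fun a b => by ring
    rwa [zero_add, zero_sub, pdens_neg, hsym, abs_neg, abs_mul, abs_two]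

theorem stmt_13
    (β : ℝ) (hβ1 : 1 < β) (hβ2 : β ≤ 2)
    (ψ : ℝ → ℝ)
    (hmeas : Measurable ψ)
    (heven : ∀ p : ℝ, ψ (-p) = ψ p)
    (hnonneg : ∀ p : ℝ, 0 ≤ ψ p)
    (hpos : ∀ p : ℝ, p ≠ 0 → 0 < ψ p)
    (hRV : ∀ l : ℝ, 0 < l →
      Filter.Tendsto (fun x => ψ (l * x) / ψ x) Filter.atTop (nhds (l ^ β)))
    (hdiff1 : ∀ p : ℝ, 0 < p → DifferentiableAt ℝ ψ p)
    (hdiff2 : ∀ p : ℝ, 0 < p → DifferentiableAt ℝ (deriv ψ) p)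
    (D₁ D₂ : ℝ)
    (hD1 : ∀ l : ℝ, 1 ≤ l → l * |deriv ψ l| ≤ D₁ * ψ l)
    (hD2 : ∀ l : ℝ, 1 ≤ l → l ^ 2 * |deriv (deriv ψ) l| ≤ D₂ * ψ l)
    (hint1 : MeasureTheory.IntegrableOn (fun l : ℝ => (deriv ψ l) ^ 2) (Set.Ioc (0:ℝ) 1))
    (hint2 : MeasureTheory.IntegrableOn (fun l : ℝ => |deriv (deriv ψ) l|) (Set.Ioc (0:ℝ) 1))
    (hint3 : MeasureTheory.IntegrableOn (fun l : ℝ => ψ l / l) (Set.Ioc (0:ℝ) 1))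
    (C₀ : ℝ) (hC0 : ∀ p : ℝ, ψ p ≤ C₀ * p ^ 2)
    (hliminf : 0 < Filter.liminf (fun p : ℝ => ψ p / p ^ 2) (nhdsWithin (0:ℝ) ({0}ᶜ))) :
    ∃ C : ℝ, ∀ δ : ℝ, 0 < δ → δ < 1 → ∀ h : ℝ, ∀ r : ℝ, δ ≤ r → r ≤ 1 →
      pdens ψ r 0 ≤ C * max (psiInv ψ (1 / δ)) 1 ∧
      |pdens ψ r (0 + h) - pdens ψ r 0| ≤ C * h ^ 2 / δ ^ 3 ∧
      |2 * pdens ψ r 0 - pdens ψ r (0 + h) - pdens ψ r (0 - h)| ≤ C * h ^ 2 / δ ^ 3 :=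
  stmt_13_general β hβ1 ψ hmeas hnonneg hpos hRV hdiff1 D₁ hD1 C₀ hC0
end

section
/- There exists a constant C < ∞ such that for all t ∈ (0,1] and all y ∈ ℝ, ∫₀^t p_s(y) ds ≤ C·t·ψ⁻¹(1/t). -/
/-
Regular variation gives the doubling inequality `ψ (2x) ≥ 2^γ ψ x` for large `x`
(any `1 < γ < β`), and `x |ψ'(x)| ≤ D₁ ψ(x)` makes `ψ(x) x^D₁` nondecreasing, which
controls `ψ` between powers of two; together they give Potter's bound
`ψ p ≥ c (p/b)^γ ψ b` for `p ≥ b ≥ X`. With `e^{-x} ≤ x^{-q}` for `1/γ < q < 1` this yields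
`∫₀^∞ e^{-sψ} ≤ b + K (c ψ b)^{-q} b s^{-q}`; the power `s^{-q}` is integrable, so
`∫₀^t p_s ≤ (b t + K' (c ψ b)^{-q} b t^{1-q}) / π`. For `b = ψ⁻¹(1/t)` we have `ψ b ≥ 1/t`,
so both terms are `O(t b)`. If `ψ⁻¹(1/t) < X`, take `b = X` instead: the bound is then a
constant, and `ψ ≤ C₀ p²` forces `t ψ⁻¹(1/t) ≥ 1/(C₀ X)`.
-/

open MeasureTheory Set Filter Topology Real

section Potter

variable {ψ : ℝ → ℝ}

lemma monotoneOn_mul_rpow_of_mul_abs_deriv_le {x₀ r : ℝ} (hx₀ : 0 < x₀)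
    (hdiff : ∀ x, x₀ ≤ x → DifferentiableAt ℝ ψ x)
    (hderiv : ∀ x, x₀ ≤ x → x * |deriv ψ x| ≤ r * ψ x) :
    MonotoneOn (fun x => ψ x * x ^ r) (Ici x₀) := by
  have hasDeriv : ∀ x, x₀ ≤ x → HasDerivAt (fun x => ψ x * x ^ r)
      (deriv ψ x * x ^ r + ψ x * (r * x ^ (r - 1))) x := fun x hx =>
    (hdiff x hx).hasDerivAt.mul (hasDerivAt_rpow_const (Or.inl (hx₀.trans_le hx).ne'))
  refine monotoneOn_of_deriv_nonneg (convex_Ici x₀)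
    (fun x hx => (hasDeriv x hx).continuousAt.continuousWithinAt)
    (fun x hx => (hasDeriv x (interior_subset hx)).differentiableAt.differentiableWithinAt)
    fun x hx => ?_
  rw [interior_Ici] at hx
  have hx0 : 0 < x := hx₀.trans hx
  rw [(hasDeriv x hx.le).deriv]
  have hsplit : deriv ψ x * x ^ r + ψ x * (r * x ^ (r - 1))
      = x ^ (r - 1) * (x * deriv ψ x + r * ψ x) := by
    rw [rpow_sub_one hx0.ne']; field_simp
  have hbracket : 0 ≤ x * deriv ψ x + r * ψ x := by
    nlinarith [hderiv x hx.le, mul_le_mul_of_nonneg_left (neg_abs_le (deriv ψ x)) hx0.le]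
  rw [hsplit]
  exact mul_nonneg (rpow_nonneg hx0.le _) hbracket

lemma pow_mul_le_apply_two_pow_mul {a X : ℝ} (ha : 0 ≤ a) (hX : 0 ≤ X)
    (hdouble : ∀ x, X ≤ x → a * ψ x ≤ ψ (2 * x)) (k : ℕ) {x : ℝ} (hx : X ≤ x) :
    a ^ k * ψ x ≤ ψ (2 ^ k * x) := by
  induction k with
  | zero => simp
  | succ k ih =>
    have hle : X ≤ 2 ^ k * x :=
      hx.trans (le_mul_of_one_le_left (hX.trans hx) (one_le_pow₀ one_le_two))
    calc a ^ (k + 1) * ψ x = a * (a ^ k * ψ x) := by ring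
      _ ≤ a * ψ (2 ^ k * x) := mul_le_mul_of_nonneg_left ih ha
      _ ≤ ψ (2 * (2 ^ k * x)) := hdouble _ hle
      _ = ψ (2 ^ (k + 1) * x) := by rw [pow_succ]; ring_nf

lemma mul_rpow_mul_le_apply_mul {X r γ : ℝ} (hX : 0 < X) (hr : 0 ≤ r) (hγ : 0 ≤ γ)
    (hnonneg : ∀ x, X ≤ x → 0 ≤ ψ x) (hmono : MonotoneOn (fun x => ψ x * x ^ r) (Ici X))
    (hdouble : ∀ x, X ≤ x → 2 ^ γ * ψ x ≤ ψ (2 * x)) {x l : ℝ} (hx : X ≤ x)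
    (hl : 1 ≤ l) :
    (2 ^ (r + γ))⁻¹ * l ^ γ * ψ x ≤ ψ (l * x) := by
  obtain ⟨k, hkl, hlk⟩ := exists_nat_pow_near hl one_lt_two
  have hx0 : 0 < x := hX.trans_le hx
  set y := (2 : ℝ) ^ k * x
  have hy0 : 0 < y := by positivity
  have hxy : x ≤ y := le_mul_of_one_le_left hx0.le (one_le_pow₀ one_le_two)
  have hylx : y ≤ l * x := mul_le_mul_of_nonneg_right hkl hx0.le
  have hlxy : l * x ≤ 2 * y := by
    calc l * x ≤ 2 ^ (k + 1) * x := mul_le_mul_of_nonneg_right hlk.le hx0.le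
      _ = 2 * y := by ring
  have hlower : (l / 2) ^ γ * ψ x ≤ ψ y := by
    calc (l / 2) ^ γ * ψ x ≤ ((2 : ℝ) ^ k) ^ γ * ψ x := by
          refine mul_le_mul_of_nonneg_right (rpow_le_rpow (by positivity) ?_ hγ)
            (hnonneg x hx)
          rw [pow_succ] at hlk; linarith
      _ = (2 ^ γ) ^ k * ψ x := by
          rw [← rpow_natCast, ← rpow_natCast, ← rpow_mul zero_le_two, ← rpow_mul zero_le_two,
            mul_comm (k : ℝ)]
      _ ≤ ψ y := pow_mul_le_apply_two_pow_mul (by positivity) hX.le hdouble k hx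
  have hupper : ψ y ≤ 2 ^ r * ψ (l * x) := by
    have hψlx := hnonneg _ (hx.trans (hxy.trans hylx))
    refine le_of_mul_le_mul_right ?_ (rpow_pos_of_pos hy0 r)
    calc ψ y * y ^ r ≤ ψ (l * x) * (l * x) ^ r :=
          hmono (hx.trans hxy) (hx.trans (hxy.trans hylx)) hylx
      _ ≤ ψ (l * x) * (2 * y) ^ r :=
          mul_le_mul_of_nonneg_left (rpow_le_rpow (by positivity) hlxy hr) hψlx
      _ = 2 ^ r * ψ (l * x) * y ^ r := by rw [mul_rpow zero_le_two hy0.le]; ring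
  rw [mul_assoc, inv_mul_le_iff₀ (by positivity), rpow_add two_pos]
  calc l ^ γ * ψ x = 2 ^ γ * ((l / 2) ^ γ * ψ x) := by
        rw [div_rpow (by linarith) zero_le_two]; field_simp
    _ ≤ 2 ^ γ * (2 ^ r * ψ (l * x)) := by gcongr ?_ * ?_; exact hlower.trans hupper
    _ = 2 ^ r * 2 ^ γ * ψ (l * x) := by ring

lemma eventually_rpow_mul_le_apply_two_mul {β γ : ℝ} (hγ : γ < β)
    (hRV : Tendsto (fun x => ψ (2 * x) / ψ x) atTop (𝓝 (2 ^ β)))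
    (hpos : ∀ᶠ x in atTop, 0 < ψ x) :
    ∀ᶠ x in atTop, 2 ^ γ * ψ x ≤ ψ (2 * x) := by
  filter_upwards [hRV.eventually (lt_mem_nhds (rpow_lt_rpow_of_exponent_lt one_lt_two hγ)), hpos]
    with x hx hψx
  exact ((lt_div_iff₀ hψx).1 hx).le

lemma tendsto_atTop_of_mul_rpow_le {X c γ : ℝ} (hX : 0 < X) (hc : 0 < c) (hγ : 0 < γ)
    (hψX : 0 < ψ X) (hgrowth : ∀ l, 1 ≤ l → c * l ^ γ * ψ X ≤ ψ (l * X)) :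
    Tendsto ψ atTop atTop := by
  have hlim : Tendsto (fun x => c * (x / X) ^ γ * ψ X) atTop atTop :=
    ((tendsto_rpow_atTop hγ).comp (tendsto_id.atTop_div_const hX)).const_mul_atTop hc
      |>.atTop_mul_const hψX
  refine tendsto_atTop_mono' atTop ?_ hlim
  filter_upwards [eventually_ge_atTop X] with x hx
  simpa [div_mul_cancel₀ x hX.ne'] using hgrowth (x / X) ((one_le_div hX).2 hx)

end Potter

section HeatKernel

variable {ψ : ℝ → ℝ}

lemma exp_neg_le_rpow_neg {x q : ℝ} (hx : 0 < x) (hq0 : 0 ≤ q) (hq1 : q ≤ 1) :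
    exp (-x) ≤ x ^ (-q) := by
  rcases le_total x 1 with h | h
  · exact (exp_le_one_iff.2 (by linarith)).trans
      (one_le_rpow_of_pos_of_le_one_of_nonpos hx h (by linarith))
  · calc exp (-x) ≤ x ^ (-1 : ℝ) := by
          rw [exp_neg, rpow_neg_one]
          exact inv_anti₀ hx (by linarith [add_one_le_exp x])
      _ ≤ x ^ (-q) := rpow_le_rpow_of_exponent_le h (by linarith)

lemma exp_neg_mul_le_of_mul_rpow_le {b κ γ q s p : ℝ} (hb : 0 < b) (hκ : 0 < κ) (hs : 0 < s)
    (hq0 : 0 ≤ q) (hq1 : q ≤ 1) (hp : b ≤ p) (htail : κ * (p / b) ^ γ ≤ ψ p) :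
    exp (-s * ψ p) ≤ s ^ (-q) * κ ^ (-q) * b ^ (γ * q) * p ^ (-(γ * q)) := by
  have hp0 : 0 < p := hb.trans_le hp
  have hlow : 0 < κ * (p / b) ^ γ := by positivity
  calc exp (-s * ψ p) ≤ (s * ψ p) ^ (-q) := by
        rw [neg_mul]; exact exp_neg_le_rpow_neg (by nlinarith) hq0 hq1
    _ ≤ (s * (κ * (p / b) ^ γ)) ^ (-q) :=
        rpow_le_rpow_of_nonpos (by positivity) (by gcongr) (by linarith)
    _ = s ^ (-q) * κ ^ (-q) * b ^ (γ * q) * p ^ (-(γ * q)) := by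
        rw [mul_rpow hs.le hlow.le, mul_rpow hκ.le (by positivity), ← rpow_mul (by positivity),
          div_rpow hp0.le hb.le, mul_neg, rpow_neg hb.le (γ * q), div_inv_eq_mul]
        ring

lemma integrableOn_exp_neg_mul_Ioc (hmeas : Measurable ψ) (hnonneg : ∀ p, 0 ≤ ψ p) {s : ℝ}
    (hs : 0 ≤ s) (b : ℝ) : IntegrableOn (fun p => exp (-s * ψ p)) (Ioc 0 b) :=
  IntegrableOn.of_bound measure_Ioc_lt_top
    (hmeas.const_mul (-s)).exp.aestronglyMeasurable 1 <| ae_of_all _ fun p => by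
      rw [norm_of_nonneg (exp_pos _).le, exp_le_one_iff, neg_mul, neg_nonpos]
      exact mul_nonneg hs (hnonneg p)

lemma integrableOn_exp_neg_mul_Ioi (hmeas : Measurable ψ) {b κ γ q s : ℝ} (hb : 0 < b)
    (hκ : 0 < κ) (hs : 0 < s) (hq0 : 0 ≤ q) (hq1 : q ≤ 1) (hγq : 1 < γ * q)
    (htail : ∀ p, b ≤ p → κ * (p / b) ^ γ ≤ ψ p) :
    IntegrableOn (fun p => exp (-s * ψ p)) (Ioi b) := by
  refine Integrable.mono'
    ((integrableOn_Ioi_rpow_of_lt (a := -(γ * q)) (by linarith) hb).const_mul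
      (s ^ (-q) * κ ^ (-q) * b ^ (γ * q)))
    (hmeas.const_mul (-s)).exp.aestronglyMeasurable ?_
  filter_upwards [ae_restrict_mem measurableSet_Ioi] with p hp
  rw [norm_of_nonneg (exp_pos _).le]
  exact exp_neg_mul_le_of_mul_rpow_le hb hκ hs hq0 hq1 (le_of_lt hp) (htail p (le_of_lt hp))

lemma setIntegral_exp_neg_mul_Ioi_le (hmeas : Measurable ψ) {b κ γ q s : ℝ} (hb : 0 < b)
    (hκ : 0 < κ) (hs : 0 < s) (hq0 : 0 ≤ q) (hq1 : q ≤ 1) (hγq : 1 < γ * q)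
    (htail : ∀ p, b ≤ p → κ * (p / b) ^ γ ≤ ψ p) :
    ∫ p in Ioi b, exp (-s * ψ p) ≤ κ ^ (-q) * b / (γ * q - 1) * s ^ (-q) := by
  have hrpow := integrableOn_Ioi_rpow_of_lt (by linarith : -(γ * q) < -1) hb
  calc ∫ p in Ioi b, exp (-s * ψ p)
      ≤ ∫ p in Ioi b, s ^ (-q) * κ ^ (-q) * b ^ (γ * q) * p ^ (-(γ * q)) :=
        setIntegral_mono_on (integrableOn_exp_neg_mul_Ioi hmeas hb hκ hs hq0 hq1 hγq htail)
          (hrpow.const_mul _) measurableSet_Ioi fun p hp =>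
            exp_neg_mul_le_of_mul_rpow_le hb hκ hs hq0 hq1 (le_of_lt hp) (htail p (le_of_lt hp))
    _ = s ^ (-q) * κ ^ (-q) * (b ^ (γ * q) * b ^ (-(γ * q) + 1)) / (γ * q - 1) := by
        rw [integral_const_mul, integral_Ioi_rpow_of_lt (by linarith) hb, neg_div, ← div_neg]
        ring
    _ = κ ^ (-q) * b / (γ * q - 1) * s ^ (-q) := by
        rw [← rpow_add hb, add_neg_cancel_left, rpow_one]; ring

lemma setIntegral_exp_neg_mul_le (hmeas : Measurable ψ) (hnonneg : ∀ p, 0 ≤ ψ p)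
    {b κ γ q s : ℝ} (hb : 0 < b) (hκ : 0 < κ) (hs : 0 < s) (hq0 : 0 ≤ q) (hq1 : q ≤ 1)
    (hγq : 1 < γ * q) (htail : ∀ p, b ≤ p → κ * (p / b) ^ γ ≤ ψ p) :
    IntegrableOn (fun p => exp (-s * ψ p)) (Ioi 0) ∧
      ∫ p in Ioi 0, exp (-s * ψ p) ≤ b + κ ^ (-q) * b / (γ * q - 1) * s ^ (-q) := by
  have hIoc := integrableOn_exp_neg_mul_Ioc hmeas hnonneg hs.le b
  have hIoi := integrableOn_exp_neg_mul_Ioi hmeas hb hκ hs hq0 hq1 hγq htail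
  rw [← Ioc_union_Ioi_eq_Ioi hb.le]
  refine ⟨hIoc.union hIoi, ?_⟩
  rw [setIntegral_union (Ioc_disjoint_Ioi le_rfl) measurableSet_Ioi hIoc hIoi]
  gcongr
  · calc ∫ p in Ioc 0 b, exp (-s * ψ p) ≤ ∫ _ in Ioc 0 b, (1 : ℝ) :=
          setIntegral_mono_on hIoc (integrableOn_const measure_Ioc_lt_top.ne) measurableSet_Ioc
            fun p _ => exp_le_one_iff.2 (by nlinarith [hnonneg p])
      _ = b := by simp [hb.le]
  · exact setIntegral_exp_neg_mul_Ioi_le hmeas hb hκ hs hq0 hq1 hγq htail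

lemma abs_pdens_le {s : ℝ} (hint : IntegrableOn (fun p => exp (-s * ψ p)) (Ioi 0)) (y : ℝ) :
    |pdens ψ s y| ≤ (1 / π) * ∫ p in Ioi 0, exp (-s * ψ p) := by
  rw [pdens, abs_mul, abs_of_pos (by positivity : 0 < 1 / π), ← norm_eq_abs]
  gcongr
  refine norm_integral_le_of_norm_le hint (ae_of_all _ fun p => ?_)
  rw [norm_mul, norm_of_nonneg (exp_pos _).le]
  exact mul_le_of_le_one_left (exp_pos _).le (abs_cos_le_one _)

lemma stronglyMeasurable_pdens (hmeas : Measurable ψ) (y : ℝ) :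
    StronglyMeasurable fun s => pdens ψ s y := by
  have hF : StronglyMeasurable fun z : ℝ × ℝ => cos (z.2 * y) * exp (-z.1 * ψ z.2) :=
    ((measurable_cos.comp (measurable_snd.mul_const y)).mul
      ((measurable_fst.neg.mul (hmeas.comp measurable_snd)).exp)).stronglyMeasurable
  exact stronglyMeasurable_const.mul (hF.integral_prod_right' (ν := volume.restrict (Ioi 0)))

lemma intervalIntegral_le_of_abs_le_add_mul_rpow {f : ℝ → ℝ} {A B q t : ℝ}
    (hf : AEStronglyMeasurable f) (hq : q < 1) (ht : 0 ≤ t)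
    (hbound : ∀ s ∈ Ioc 0 t, |f s| ≤ A + B * s ^ (-q)) :
    ∫ s in 0..t, f s ≤ A * t + B * (t ^ (1 - q) / (1 - q)) := by
  have hg : IntervalIntegrable (fun s => A + B * s ^ (-q)) volume 0 t :=
    intervalIntegrable_const.add
      ((intervalIntegral.intervalIntegrable_rpow' (by linarith)).const_mul B)
  have hfi : IntervalIntegrable f volume 0 t := by
    refine hg.mono_fun' hf.restrict ?_
    rw [uIoc_of_le ht]
    filter_upwards [ae_restrict_mem measurableSet_Ioc] with s hs
    exact hbound s hs
  calc ∫ s in 0..t, f s ≤ ∫ s in 0..t, (A + B * s ^ (-q)) :=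
        intervalIntegral.integral_mono_on_of_le_Ioo ht hfi hg fun s hs =>
          (le_abs_self _).trans (hbound s (Ioo_subset_Ioc_self hs))
    _ = A * t + B * (t ^ (1 - q) / (1 - q)) := by
        rw [intervalIntegral.integral_add intervalIntegrable_const
          ((intervalIntegral.intervalIntegrable_rpow' (by linarith)).const_mul B),
          intervalIntegral.integral_const_mul, integral_rpow (Or.inl (by linarith)),
          zero_rpow (by linarith), show -q + 1 = 1 - q by ring]
        simp only [intervalIntegral.integral_const, sub_zero, smul_eq_mul]; ring

lemma integral_pdens_le_of_mul_rpow_le (hmeas : Measurable ψ) (hnonneg : ∀ p, 0 ≤ ψ p)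
    {b κ γ q t : ℝ} (hb : 0 < b) (hκ : 0 < κ) (hq0 : 0 ≤ q) (hq1 : q < 1)
    (hγq : 1 < γ * q) (htail : ∀ p, b ≤ p → κ * (p / b) ^ γ ≤ ψ p) (ht : 0 ≤ t) (y : ℝ) :
    ∫ s in 0..t, pdens ψ s y ≤
      1 / π * b * (t + κ ^ (-q) / ((γ * q - 1) * (1 - q)) * t ^ (1 - q)) := by
  have h := intervalIntegral_le_of_abs_le_add_mul_rpow
    (A := 1 / π * b) (B := 1 / π * (κ ^ (-q) * b / (γ * q - 1)))
    (stronglyMeasurable_pdens hmeas y).aestronglyMeasurable hq1 ht fun s hs => by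
      obtain ⟨hint, hle⟩ :=
        setIntegral_exp_neg_mul_le hmeas hnonneg hb hκ hs.1 hq0 hq1.le hγq htail
      calc |pdens ψ s y| ≤ 1 / π * ∫ p in Ioi 0, exp (-s * ψ p) := abs_pdens_le hint y
        _ ≤ 1 / π * (b + κ ^ (-q) * b / (γ * q - 1) * s ^ (-q)) := by gcongr
        _ = _ := by ring
  refine h.trans (le_of_eq ?_)
  field_simp

end HeatKernel

section GeneralizedInverse

variable {ψ : ℝ → ℝ} {u : ℝ}

lemma psiInv_pos {C₀ : ℝ} (hC0 : ∀ p, ψ p ≤ C₀ * p ^ 2) (hu : 0 < u)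
    (hne : {l | 0 < l ∧ u ≤ ψ l}.Nonempty) : 0 < psiInv ψ u := by
  obtain ⟨l₀, hl₀, hψl₀⟩ := hne
  have hC₀ : 0 < C₀ :=
    pos_of_mul_pos_left (hu.trans_le (hψl₀.trans (hC0 l₀))) (sq_nonneg l₀)
  refine (sqrt_pos.2 (div_pos hu hC₀)).trans_le (le_csInf ⟨l₀, hl₀, hψl₀⟩ ?_)
  rintro l ⟨hl, hψl⟩
  rw [sqrt_le_left hl.le, div_le_iff₀ hC₀]
  linarith [hC0 l]

lemma le_apply_psiInv (hcont : ContinuousOn ψ (Ioi 0)) (hne : {l | 0 < l ∧ u ≤ ψ l}.Nonempty)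
    (hpos : 0 < psiInv ψ u) : u ≤ ψ (psiInv ψ u) := by
  have hmem : psiInv ψ u ∈ closure {l | 0 < l ∧ u ≤ ψ l} :=
    csInf_mem_closure hne ⟨0, fun l hl => hl.1.le⟩
  exact closure_minimal (image_subset_iff.2 fun l (hl : 0 < l ∧ u ≤ ψ l) => hl.2) isClosed_Ici
    (mem_closure_image (hcont.continuousAt (Ioi_mem_nhds hpos)) hmem)

end GeneralizedInverse

lemma exists_integral_pdens_le_of_mul_rpow_le {ψ : ℝ → ℝ} (hmeas : Measurable ψ)
    (hnonneg : ∀ p, 0 ≤ ψ p) {X c γ : ℝ} (hX : 0 < X) (hψX : 0 < ψ X) (hc : 0 < c)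
    (hγ : 1 < γ) (hpotter : ∀ x, X ≤ x → ∀ l, 1 ≤ l → c * l ^ γ * ψ x ≤ ψ (l * x)) :
    ∃ q K : ℝ, 0 ≤ q ∧ q < 1 ∧ 0 ≤ K ∧ ∀ b, X ≤ b → ∀ t, 0 ≤ t → ∀ y,
      ∫ s in (0:ℝ)..t, pdens ψ s y ≤
        1 / π * b * t + K * b * ((c * ψ b) ^ (-q) * t ^ (1 - q)) := by
  set q := 2 / (1 + γ)
  have hq0 : 0 ≤ q := by positivity
  have hq1 : q < 1 := by rw [div_lt_one (by linarith)]; linarith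
  have hγq : 1 < γ * q := by rw [mul_div_assoc', lt_div_iff₀ (by linarith)]; linarith
  have hψpos : ∀ b, X ≤ b → 0 < ψ b := fun b hb => by
    have h := hpotter X le_rfl (b / X) ((one_le_div hX).2 hb)
    rw [div_mul_cancel₀ b hX.ne'] at h
    exact (mul_pos (mul_pos hc (rpow_pos_of_pos (div_pos (hX.trans_le hb) hX) γ)) hψX).trans_le h
  refine ⟨q, 1 / π / ((γ * q - 1) * (1 - q)), hq0, hq1,
    div_nonneg (by positivity) (mul_pos (by linarith) (by linarith)).le, fun b hb t ht y => ?_⟩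
  have hb0 := hX.trans_le hb
  refine (integral_pdens_le_of_mul_rpow_le hmeas hnonneg hb0 (mul_pos hc (hψpos b hb)) hq0 hq1
    hγq (fun p hp => ?_) ht y).trans_eq (by ring)
  have h := hpotter b hb (p / b) ((one_le_div hb0).2 hp)
  rwa [div_mul_cancel₀ p hb0.ne', mul_right_comm] at h

theorem exists_integral_pdens_le_mul_psiInv {ψ : ℝ → ℝ} (hmeas : Measurable ψ)
    (hnonneg : ∀ p, 0 ≤ ψ p) (hcont : ContinuousOn ψ (Ioi 0)) {C₀ : ℝ}
    (hC0 : ∀ p, ψ p ≤ C₀ * p ^ 2) {X c γ : ℝ} (hX : 0 < X) (hψX : 0 < ψ X) (hc : 0 < c)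
    (hγ : 1 < γ) (hpotter : ∀ x, X ≤ x → ∀ l, 1 ≤ l → c * l ^ γ * ψ x ≤ ψ (l * x)) :
    ∃ C : ℝ, ∀ t : ℝ, 0 < t → t ≤ 1 → ∀ y : ℝ,
      (∫ s in (0:ℝ)..t, pdens ψ s y) ≤ C * t * psiInv ψ (1 / t) := by
  obtain ⟨q, K, hq0, hq1, hK, hbound⟩ :=
    exists_integral_pdens_le_of_mul_rpow_le hmeas hnonneg hX hψX hc hγ hpotter
  have hunbdd : Tendsto ψ atTop atTop :=
    tendsto_atTop_of_mul_rpow_le hX hc (by linarith) hψX fun l hl => hpotter X le_rfl l hl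
  have hC₀ : 0 < C₀ := pos_of_mul_pos_left (hψX.trans_le (hC0 X)) (sq_nonneg X)
  refine ⟨1 / π + K * c ^ (-q) + (1 / π * X + K * X * (c * ψ X) ^ (-q)) * (C₀ * X), ?_⟩
  intro t ht ht1 y
  obtain ⟨l, hψl, hl⟩ :=
    ((hunbdd.eventually_ge_atTop (1 / t)).and (eventually_gt_atTop 0)).exists
  have hne : {l | 0 < l ∧ 1 / t ≤ ψ l}.Nonempty := ⟨l, hl, hψl⟩
  set a := psiInv ψ (1 / t)
  have ha : 0 < a := psiInv_pos hC0 (by positivity) hne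
  have hψa : 1 / t ≤ ψ a := le_apply_psiInv hcont hne ha
  rcases le_total X a with hXa | haX
  · have hct : c / t ≤ c * ψ a := by rw [div_eq_mul_one_div]; gcongr
    have hcψa : (c * ψ a) ^ (-q) * t ^ (1 - q) ≤ c ^ (-q) * t := by
      calc (c * ψ a) ^ (-q) * t ^ (1 - q) ≤ (c / t) ^ (-q) * t ^ (1 - q) :=
            mul_le_mul_of_nonneg_right
              (rpow_le_rpow_of_nonpos (by positivity) hct (by linarith)) (by positivity)
        _ = c ^ (-q) * t := by
            rw [div_rpow hc.le ht.le, rpow_neg ht.le, div_inv_eq_mul, mul_assoc,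
              ← rpow_add ht, add_sub_cancel, rpow_one]
    calc ∫ s in (0:ℝ)..t, pdens ψ s y
        ≤ 1 / π * a * t + K * a * ((c * ψ a) ^ (-q) * t ^ (1 - q)) :=
          hbound a hXa t ht.le y
      _ ≤ 1 / π * a * t + K * a * (c ^ (-q) * t) := by gcongr
      _ = (1 / π + K * c ^ (-q)) * t * a := by ring
      _ ≤ _ := by gcongr ?_ * _ * _; exact le_add_of_nonneg_right (by positivity)
  · have hta : 1 ≤ C₀ * X * (t * a) := by
      have h := hψa.trans (hC0 a)
      rw [div_le_iff₀ ht] at h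
      nlinarith [mul_le_mul_of_nonneg_left haX (mul_pos hC₀ ha).le]
    calc ∫ s in (0:ℝ)..t, pdens ψ s y
        ≤ 1 / π * X * t + K * X * ((c * ψ X) ^ (-q) * t ^ (1 - q)) :=
          hbound X le_rfl t ht.le y
      _ ≤ 1 / π * X * 1 + K * X * ((c * ψ X) ^ (-q) * 1) := by
          gcongr
          exact rpow_le_one ht.le ht1 (by linarith)
      _ ≤ (1 / π * X + K * X * (c * ψ X) ^ (-q)) * (C₀ * X * (t * a)) := by
          rw [mul_one, mul_one]; exact le_mul_of_one_le_right (by positivity) hta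
      _ = (1 / π * X + K * X * (c * ψ X) ^ (-q)) * (C₀ * X) * t * a := by ring
      _ ≤ _ := by gcongr ?_ * _ * _; exact le_add_of_nonneg_left (by positivity)

theorem stmt_17_general
    (β : ℝ) (hβ1 : 1 < β)
    (ψ : ℝ → ℝ)
    (hmeas : Measurable ψ)
    (hnonneg : ∀ p : ℝ, 0 ≤ ψ p)
    (hpos : ∀ p : ℝ, p ≠ 0 → 0 < ψ p)
    (hRV : ∀ l : ℝ, 0 < l →
      Filter.Tendsto (fun x => ψ (l * x) / ψ x) Filter.atTop (nhds (l ^ β)))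
    (hdiff1 : ∀ p : ℝ, 0 < p → DifferentiableAt ℝ ψ p)
    (D₁ : ℝ)
    (hD1 : ∀ l : ℝ, 1 ≤ l → l * |deriv ψ l| ≤ D₁ * ψ l)
    (C₀ : ℝ) (hC0 : ∀ p : ℝ, ψ p ≤ C₀ * p ^ 2) :
    ∃ C : ℝ, ∀ t : ℝ, 0 < t → t ≤ 1 → ∀ y : ℝ,
      (∫ s in (0:ℝ)..t, pdens ψ s y) ≤ C * t * psiInv ψ (1 / t) := by
  have hψpos : ∀ x, 1 ≤ x → 0 < ψ x := fun x hx => hpos x (by positivity)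
  have hD₁ : 0 ≤ D₁ := nonneg_of_mul_nonneg_left
    ((abs_nonneg _).trans (by simpa using hD1 1 le_rfl)) (hψpos 1 le_rfl)
  obtain ⟨γ, hγ1, hγβ⟩ := exists_between hβ1
  obtain ⟨X₀, hdouble⟩ := eventually_atTop.1 <| eventually_rpow_mul_le_apply_two_mul
    hγβ (hRV 2 two_pos) (eventually_atTop.2 ⟨1, hψpos⟩)
  set X := max X₀ 1
  have hmono := (monotoneOn_mul_rpow_of_mul_abs_deriv_le one_pos
    (fun x hx => hdiff1 x (by linarith)) hD1).mono (Ici_subset_Ici.2 (le_max_right X₀ 1))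
  exact exists_integral_pdens_le_mul_psiInv hmeas hnonneg
    (fun x hx => (hdiff1 x hx).continuousAt.continuousWithinAt) hC0 (by positivity)
    (hψpos X (le_max_right _ _)) (by positivity) hγ1 fun x hx l hl =>
      mul_rpow_mul_le_apply_mul (by positivity) hD₁ (by linarith) (fun x _ => hnonneg x) hmono
        (fun x hx => hdouble x ((le_max_left _ _).trans hx)) hx hl

theorem stmt_17
    (β : ℝ) (hβ1 : 1 < β) (hβ2 : β ≤ 2)
    (ψ : ℝ → ℝ)
    (hmeas : Measurable ψ)
    (heven : ∀ p : ℝ, ψ (-p) = ψ p)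
    (hnonneg : ∀ p : ℝ, 0 ≤ ψ p)
    (hpos : ∀ p : ℝ, p ≠ 0 → 0 < ψ p)
    (hRV : ∀ l : ℝ, 0 < l →
      Filter.Tendsto (fun x => ψ (l * x) / ψ x) Filter.atTop (nhds (l ^ β)))
    (hdiff1 : ∀ p : ℝ, 0 < p → DifferentiableAt ℝ ψ p)
    (hdiff2 : ∀ p : ℝ, 0 < p → DifferentiableAt ℝ (deriv ψ) p)
    (D₁ D₂ : ℝ)
    (hD1 : ∀ l : ℝ, 1 ≤ l → l * |deriv ψ l| ≤ D₁ * ψ l)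
    (hD2 : ∀ l : ℝ, 1 ≤ l → l ^ 2 * |deriv (deriv ψ) l| ≤ D₂ * ψ l)
    (hint1 : MeasureTheory.IntegrableOn (fun l : ℝ => (deriv ψ l) ^ 2) (Set.Ioc (0:ℝ) 1))
    (hint2 : MeasureTheory.IntegrableOn (fun l : ℝ => |deriv (deriv ψ) l|) (Set.Ioc (0:ℝ) 1))
    (hint3 : MeasureTheory.IntegrableOn (fun l : ℝ => ψ l / l) (Set.Ioc (0:ℝ) 1))
    (C₀ : ℝ) (hC0 : ∀ p : ℝ, ψ p ≤ C₀ * p ^ 2)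
    (hliminf : 0 < Filter.liminf (fun p : ℝ => ψ p / p ^ 2) (nhdsWithin (0:ℝ) ({0}ᶜ))) :
    ∃ C : ℝ, ∀ t : ℝ, 0 < t → t ≤ 1 → ∀ y : ℝ,
      (∫ s in (0:ℝ)..t, pdens ψ s y) ≤ C * t * psiInv ψ (1 / t) :=
  stmt_17_general β hβ1 ψ hmeas hnonneg hpos hRV hdiff1 D₁ hD1 C₀ hC0
end

section
/- For every h > 0 the integral c_{ψ,h,0} = ∫₀^∞ (p_s(0) − p_s(h)) ds is finite and equals (1/π)∫₀^∞ (1 − cos(ph))/ψ(p) dp, and lim_{h→0⁺} h·ψ(1/h)·c_{ψ,h,0} = c_{β,0}, where c_{β,0} = (2/π)∫₀^∞ sin²(p/2)/p^β dp. -/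
open Real MeasureTheory Set Filter Topology NNReal

theorem eventually_forall_Icc_abs_sub_le {f : ℝ → ℝ} {a : ℝ} {K : ℝ≥0}
    (hf : LipschitzOnWith K f (Ici 0))
    (hlim : ∀ u, Tendsto (fun t => f (t + u) - f t) atTop (𝓝 (a * u)))
    {ε : ℝ} (hε : 0 < ε) :
    ∀ᶠ t in atTop, ∀ u ∈ Icc (0:ℝ) 1, |f (t + u) - f t - a * u| ≤ ε := by
  let F : Ici (0:ℝ) → Icc (0:ℝ) 1 → ℝ := fun t u => f (t + u) - f t - a * u
  have hlip : ∀ t, LipschitzWith (K + ‖a‖₊) (F t) := fun t => by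
    refine LipschitzWith.of_dist_le_mul fun u v => ?_
    have hfuv := hf.dist_le_mul (t + u) (by simp [add_nonneg t.2 u.2.1])
      (t + v) (by simp [add_nonneg t.2 v.2.1])
    simp only [F, Real.dist_eq, Subtype.dist_eq] at hfuv ⊢
    calc |f (t + u) - f t - a * u - (f (t + v) - f t - a * v)|
        = |(f (t + u) - f (t + v)) - a * (u - v)| := by ring_nf
      _ ≤ |f (t + u) - f (t + v)| + |a| * |(u:ℝ) - v| := by
        rw [← abs_mul]; exact abs_sub _ _
      _ ≤ (K + ‖a‖₊ : ℝ≥0) * |(u:ℝ) - v| := by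
        push_cast; rw [Real.norm_eq_abs, add_mul]; gcongr; simpa using hfuv
  have hpt : Tendsto F atTop (𝓝 0) := by
    rw [tendsto_pi_nhds]
    intro u
    simpa [F, Function.comp_def] using
      ((hlim u).sub_const (a * u)).comp (tendsto_Ici_atTop.1 tendsto_id)
  have hunif := UniformFun.tendsto_iff_tendstoUniformly.1
    (((LipschitzWith.uniformEquicontinuous F _ hlip).equicontinuous.tendsto_uniformFun_iff_pi
      atTop 0).2 hpt)
  obtain ⟨T, hT⟩ := eventually_atTop.1 (Metric.tendstoUniformly_iff.1 hunif ε hε)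
  refine eventually_atTop.2 ⟨T, fun t ht u hu => ?_⟩
  have := (hT ⟨t, T.2.trans ht⟩ ht ⟨u, hu⟩).le
  simp only [F, Real.dist_eq, UniformFun.toFun_ofFun, Pi.zero_apply, zero_sub, abs_neg] at this
  exact this

theorem eventually_forall_abs_sub_le_mul {f : ℝ → ℝ} {a : ℝ} {K : ℝ≥0}
    (hf : LipschitzOnWith K f (Ici 0))
    (hlim : ∀ u, Tendsto (fun t => f (t + u) - f t) atTop (𝓝 (a * u)))
    {ε : ℝ} (hε : 0 < ε) :
    ∀ᶠ t in atTop, ∀ u, 0 ≤ u → |f (t + u) - f t - a * u| ≤ ε * (u + 1) := by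
  obtain ⟨T, hT⟩ := eventually_atTop.1 (eventually_forall_Icc_abs_sub_le hf hlim hε)
  have hsteps : ∀ n : ℕ, ∀ t ≥ T, ∀ r ∈ Icc (0:ℝ) 1,
      |f (t + (n + r)) - f t - a * (n + r)| ≤ ε * (n + 1) := by
    intro n
    induction n with
    | zero => intro t ht r hr; simpa using hT t ht r hr
    | succ n ih =>
      intro t ht r hr
      have h1 := hT t ht 1 ⟨zero_le_one, le_rfl⟩
      have h2 := ih (t + 1) (by linarith) r hr
      calc |f (t + (↑(n + 1) + r)) - f t - a * (↑(n + 1) + r)|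
          = |(f (t + 1 + (n + r)) - f (t + 1) - a * (n + r))
              + (f (t + 1) - f t - a * 1)| := by
            push_cast; ring_nf
        _ ≤ ε * (n + 1) + ε := (abs_add_le _ _).trans (add_le_add h2 h1)
        _ = ε * (↑(n + 1) + 1) := by push_cast; ring
  refine eventually_atTop.2 ⟨T, fun t ht u hu => ?_⟩
  have hfloor := Nat.floor_le hu
  have := hsteps ⌊u⌋₊ t ht (u - ⌊u⌋₊) ⟨by linarith, by linarith [Nat.lt_floor_add_one u]⟩
  rw [add_sub_cancel] at this
  exact this.trans (by gcongr)

variable {ψ : ℝ → ℝ}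

theorem lipschitzOnWith_log_comp_exp (hpos : ∀ p, p ≠ 0 → 0 < ψ p)
    (hdiff : ∀ p, 0 < p → DifferentiableAt ℝ ψ p) {D : ℝ}
    (hD : ∀ l, 1 ≤ l → l * |deriv ψ l| ≤ D * ψ l) :
    LipschitzOnWith D.toNNReal (fun t => log (ψ (exp t))) (Ici 0) := by
  have hderiv : ∀ t, HasDerivAt (fun t => log (ψ (exp t)))
      (deriv ψ (exp t) * exp t / ψ (exp t)) t := fun t =>
    ((hdiff _ (exp_pos t)).hasDerivAt.comp t (hasDerivAt_exp t)).log
      (hpos _ (exp_pos t).ne').ne'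
  refine (convex_Ici 0).lipschitzOnWith_of_nnnorm_hasDerivWithin_le
    (fun t _ => (hderiv t).hasDerivWithinAt) fun t ht => ?_
  rw [← NNReal.coe_le_coe, coe_nnnorm, Real.norm_eq_abs, abs_div, abs_mul,
    abs_of_pos (exp_pos t), abs_of_pos (hpos _ (exp_pos t).ne'),
    div_le_iff₀ (hpos _ (exp_pos t).ne'), mul_comm]
  exact (hD _ (one_le_exp ht)).trans
    (mul_le_mul_of_nonneg_right (le_coe_toNNReal D) (hpos _ (exp_pos t).ne').le)

theorem tendsto_log_comp_exp_add_sub {β : ℝ} (hpos : ∀ p, p ≠ 0 → 0 < ψ p)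
    (hRV : ∀ l, 0 < l → Tendsto (fun x => ψ (l * x) / ψ x) atTop (𝓝 (l ^ β))) (u : ℝ) :
    Tendsto (fun t => log (ψ (exp (t + u))) - log (ψ (exp t))) atTop (𝓝 (β * u)) := by
  have h := ((continuousAt_log (rpow_pos_of_pos (exp_pos u) β).ne').tendsto.comp
    ((hRV _ (exp_pos u)).comp tendsto_exp_atTop))
  rw [log_rpow (exp_pos u), log_exp] at h
  refine h.congr fun t => ?_
  simp only [Function.comp_apply, ← exp_add, add_comm u]
  exact log_div (hpos _ (exp_pos _).ne').ne' (hpos _ (exp_pos _).ne').ne'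

theorem exists_potter_bounds {β : ℝ} (hpos : ∀ p, p ≠ 0 → 0 < ψ p)
    (hRV : ∀ l, 0 < l → Tendsto (fun x => ψ (l * x) / ψ x) atTop (𝓝 (l ^ β)))
    (hdiff : ∀ p, 0 < p → DifferentiableAt ℝ ψ p) {D : ℝ}
    (hD : ∀ l, 1 ≤ l → l * |deriv ψ l| ≤ D * ψ l) {ε : ℝ} (hε : 0 < ε) :
    ∃ X, 1 ≤ X ∧ ∀ x, X ≤ x → ∀ l, 1 ≤ l →
      exp (-ε) * l ^ (β - ε) ≤ ψ (l * x) / ψ x ∧ ψ (l * x) / ψ x ≤ exp ε * l ^ (β + ε) := by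
  obtain ⟨T, hT⟩ := eventually_atTop.1 (eventually_forall_abs_sub_le_mul
    (lipschitzOnWith_log_comp_exp hpos hdiff hD) (tendsto_log_comp_exp_add_sub hpos hRV) hε)
  refine ⟨exp (max T 0), one_le_exp (le_max_right _ _), fun x hx l hl => ?_⟩
  have hx0 : 0 < x := (exp_pos _).trans_le hx
  have hl0 : 0 < l := one_pos.trans_le hl
  have hlogx : T ≤ log x := (le_max_left _ _).trans ((le_log_iff_exp_le hx0).2 hx)
  have hb := abs_le.1 (hT (log x) hlogx (log l) (log_nonneg hl))
  have hratio :
      ψ (l * x) / ψ x = exp (log (ψ (exp (log x + log l))) - log (ψ (exp (log x)))) := by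
    rw [exp_add, exp_log hx0, exp_log hl0, exp_sub, mul_comm x,
      exp_log (hpos _ (by positivity)), exp_log (hpos _ hx0.ne')]
  have hpow : ∀ c, l ^ c = exp (c * log l) := fun c => by rw [rpow_def_of_pos hl0, mul_comm]
  rw [hratio, hpow, hpow, ← exp_add, ← exp_add]
  constructor <;> gcongr <;> linarith [hb.1, hb.2]

theorem exists_pos_forall_Ioc_mul_sq_le (hpos : ∀ p, p ≠ 0 → 0 < ψ p)
    (hcont : ContinuousOn ψ (Ioi 0))
    (hliminf : 0 < liminf (fun p => ψ p / p ^ 2) (𝓝[{0}ᶜ] 0)) (X : ℝ) :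
    ∃ c, 0 < c ∧ ∀ p ∈ Ioc 0 X, c * p ^ 2 ≤ ψ p := by
  have hbdd : IsBoundedUnder (· ≥ ·) (𝓝[{0}ᶜ] 0) (fun p => ψ p / p ^ 2) :=
    isBoundedUnder_of_eventually_ge (a := 0) (eventually_nhdsWithin_of_forall fun p hp =>
      div_nonneg (hpos p hp).le (sq_nonneg p))
  obtain ⟨δ, hδ : 0 < δ, hnear⟩ := mem_nhdsGT_iff_exists_Ioo_subset.1
    (nhdsWithin_mono _ (fun p (hp : 0 < p) => hp.ne')
      (eventually_lt_of_lt_liminf (half_lt_self hliminf) hbdd))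
  obtain ⟨m, hm, hfar⟩ := isCompact_Icc.exists_forall_le' (a := 0) (s := Icc (δ / 2) X)
    (f := fun p => ψ p / p ^ 2)
    ((hcont.mono fun p hp => (half_pos hδ).trans_le hp.1).div (continuousOn_pow 2)
      fun p hp => (pow_pos ((half_pos hδ).trans_le hp.1) 2).ne')
    fun p hp =>
      have := (half_pos hδ).trans_le hp.1; div_pos (hpos p this.ne') (by positivity)
  refine ⟨min (liminf (fun p => ψ p / p ^ 2) (𝓝[{0}ᶜ] 0) / 2) m, by positivity,
    fun p hp => ?_⟩
  rw [← le_div_iff₀ (pow_pos hp.1 2)]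
  rcases lt_or_ge p δ with hpδ | hpδ
  · exact (min_le_left _ _).trans (hnear ⟨hp.1, hpδ⟩).le
  · exact (min_le_right _ _).trans (hfar p ⟨by linarith, hp.2⟩)

theorem exists_pos_forall_Ici_mul_rpow_le (hpos : ∀ p, p ≠ 0 → 0 < ψ p) {X a γ : ℝ}
    (hX : 0 < X) (ha : 0 < a) (hgrowth : ∀ l, 1 ≤ l → a * l ^ γ ≤ ψ (l * X) / ψ X) :
    ∃ c, 0 < c ∧ ∀ p, X ≤ p → c * p ^ γ ≤ ψ p := by
  have hψX := hpos X hX.ne'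
  refine ⟨a * ψ X / X ^ γ, by positivity, fun p hp => ?_⟩
  have h := hgrowth (p / X) ((one_le_div hX).2 hp)
  rw [div_mul_cancel₀ _ hX.ne', le_div_iff₀ hψX, div_rpow (hX.le.trans hp) hX.le] at h
  calc a * ψ X / X ^ γ * p ^ γ = a * (p ^ γ / X ^ γ) * ψ X := by ring
    _ ≤ ψ p := h

theorem integrableOn_exp_neg_mul_comp (hmeas : Measurable ψ) (hpos : ∀ p, p ≠ 0 → 0 < ψ p)
    {X γ c : ℝ} (hX : 1 ≤ X) (hγ : 1 ≤ γ) (hc : 0 < c)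
    (hlow : ∀ p, X ≤ p → c * p ^ γ ≤ ψ p) {s : ℝ} (hs : 0 < s) :
    IntegrableOn (fun p => exp (-s * ψ p)) (Ioi 0) := by
  -- `exp (-s ψ p) ≤ exp (s c (X - p))` on all of `(0, ∞)`, using `ψ > 0` below `X`
  refine ((integrableOn_exp_mul_Ioi (neg_lt_zero.2 (mul_pos hs hc)) 0).const_mul
    (exp (s * c * X))).mono' (by fun_prop) ?_
  filter_upwards [ae_restrict_mem measurableSet_Ioi] with p (hp : 0 < p)
  rw [Real.norm_of_nonneg (exp_pos _).le, ← exp_add, exp_le_exp]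
  rcases le_or_gt X p with hXp | hpX
  · have h1 : p ≤ p ^ γ := by
      simpa using rpow_le_rpow_of_exponent_le (hX.trans hXp) hγ
    nlinarith [hlow p hXp, mul_pos hs hc]
  · nlinarith [hpos p hp.ne', mul_pos hs hc]

theorem integrableOn_one_sub_cos_div (hmeas : Measurable ψ) (hpos : ∀ p, p ≠ 0 → 0 < ψ p)
    {X γ c₁ c₂ : ℝ} (hX : 0 < X) (hγ : 1 < γ) (hc₁ : 0 < c₁) (hc₂ : 0 < c₂)
    (hsmall : ∀ p ∈ Ioc 0 X, c₁ * p ^ 2 ≤ ψ p) (hlarge : ∀ p, X ≤ p → c₂ * p ^ γ ≤ ψ p)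
    (h : ℝ) : IntegrableOn (fun p => (1 - cos (p * h)) / ψ p) (Ioi 0) := by
  have hmeas' : Measurable (fun p => (1 - cos (p * h)) / ψ p) := by fun_prop
  rw [← Ioc_union_Ioi_eq_Ioi hX.le]
  refine IntegrableOn.union ?_ ?_
  · refine Measure.integrableOn_of_bounded (M := h ^ 2 / (2 * c₁)) measure_Ioc_lt_top.ne
      hmeas'.aestronglyMeasurable ?_
    filter_upwards [ae_restrict_mem measurableSet_Ioc] with p hp
    have hψ := hpos p hp.1.ne'
    rw [Real.norm_of_nonneg (div_nonneg (sub_nonneg.2 (cos_le_one _)) hψ.le),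
      div_le_div_iff₀ hψ (by positivity)]
    nlinarith [one_sub_sq_div_two_le_cos (x := p * h), hsmall p hp, sq_nonneg (p * h)]
  · refine ((integrableOn_Ioi_rpow_of_lt (neg_lt_neg hγ) hX).const_mul (2 / c₂)).mono'
      hmeas'.aestronglyMeasurable ?_
    filter_upwards [ae_restrict_mem measurableSet_Ioi] with p (hp : X < p)
    have hp0 := hX.trans hp
    have hψ := hpos p hp0.ne'
    rw [Real.norm_of_nonneg (div_nonneg (sub_nonneg.2 (cos_le_one _)) hψ.le), rpow_neg hp0.le,
      div_le_iff₀ hψ]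
    have := rpow_pos_of_pos hp0 γ
    calc 1 - cos (p * h) ≤ 2 / c₂ * (p ^ γ)⁻¹ * (c₂ * p ^ γ) := by
          field_simp; linarith [neg_one_le_cos (p * h)]
      _ ≤ 2 / c₂ * (p ^ γ)⁻¹ * ψ p := by gcongr; exact hlarge p hp.le

theorem integral_exp_neg_mul_Ioi {c : ℝ} (hc : 0 < c) :
    ∫ s in Ioi (0:ℝ), exp (-s * c) = 1 / c := by
  simp_rw [neg_mul, ← mul_neg, mul_comm _ (-c)]
  rw [integral_exp_mul_Ioi (neg_lt_zero.2 hc), mul_zero, exp_zero, div_neg, neg_div, neg_neg]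

theorem pdens_zero_sub_pdens {s : ℝ}
    (hs : IntegrableOn (fun p => exp (-s * ψ p)) (Ioi 0)) (h : ℝ) :
    pdens ψ s 0 - pdens ψ s h =
      (1 / π) * ∫ p in Ioi (0:ℝ), (1 - cos (p * h)) * exp (-s * ψ p) := by
  have hcos : ∀ x, IntegrableOn (fun p => cos (p * x) * exp (-s * ψ p)) (Ioi 0) := fun x =>
    hs.bdd_mul (c := 1) (by fun_prop) (ae_of_all _ fun p => abs_cos_le_one _)
  rw [pdens, pdens, ← mul_sub, ← integral_sub (hcos 0) (hcos h)]
  simp only [mul_zero, cos_zero, sub_mul, one_mul]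

theorem integrableOn_pdens_zero_sub_pdens_and_integral_eq (hmeas : Measurable ψ)
    (hpos : ∀ p, p ≠ 0 → 0 < ψ p)
    (hexp : ∀ s, 0 < s → IntegrableOn (fun p => exp (-s * ψ p)) (Ioi 0)) {h : ℝ}
    (hg : IntegrableOn (fun p => (1 - cos (p * h)) / ψ p) (Ioi 0)) :
    IntegrableOn (fun s => pdens ψ s 0 - pdens ψ s h) (Ioi 0) ∧
      ∫ s in Ioi (0:ℝ), (pdens ψ s 0 - pdens ψ s h) =
        (1 / π) * ∫ p in Ioi (0:ℝ), (1 - cos (p * h)) / ψ p := by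
  set μ := volume.restrict (Ioi (0:ℝ))
  set k : ℝ → ℝ → ℝ := fun s p => (1 - cos (p * h)) * exp (-s * ψ p)
  have hk_nonneg : ∀ s p, 0 ≤ k s p := fun s p =>
    mul_nonneg (sub_nonneg.2 (cos_le_one _)) (exp_pos _).le
  have hk_inner : ∀ p ∈ Ioi (0:ℝ), ∫ s, k s p ∂μ = (1 - cos (p * h)) / ψ p := fun p hp => by
    rw [integral_const_mul, integral_exp_neg_mul_Ioi (hpos p (ne_of_gt hp)), mul_one_div]
  have hk : Integrable (Function.uncurry k) (μ.prod μ) := by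
    refine (integrable_prod_iff' (by unfold k; fun_prop)).2 ⟨?_, ?_⟩
    · filter_upwards [ae_restrict_mem measurableSet_Ioi] with p hp
      refine ((integrableOn_exp_mul_Ioi (neg_lt_zero.2 (hpos p (ne_of_gt hp))) 0).const_mul
        (1 - cos (p * h))).congr (ae_of_all _ fun s => ?_)
      simp only [Function.uncurry_apply_pair, k, neg_mul, mul_comm (ψ p)]
    · refine hg.congr ?_
      filter_upwards [ae_restrict_mem measurableSet_Ioi] with p hp
      simp_rw [Function.uncurry_apply_pair, Real.norm_of_nonneg (hk_nonneg _ _)]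
      exact (hk_inner p hp).symm
  have hpdens :
      (fun s => (1 / π) * ∫ p, k s p ∂μ) =ᵐ[μ] fun s => pdens ψ s 0 - pdens ψ s h := by
    filter_upwards [ae_restrict_mem measurableSet_Ioi] with s hs
    exact (pdens_zero_sub_pdens (hexp s hs) h).symm
  refine ⟨(hk.integral_prod_left.const_mul _).congr hpdens, ?_⟩
  rw [← integral_congr_ae hpdens, integral_const_mul, integral_integral_swap hk]
  congr 1
  exact setIntegral_congr_fun measurableSet_Ioi hk_inner

theorem mul_integral_one_sub_cos_div_eq {h : ℝ} (hh : 0 < h) :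
    h * ψ (1 / h) * ((1 / π) * ∫ p in Ioi (0:ℝ), (1 - cos (p * h)) / ψ p) =
      (1 / π) * ∫ q in Ioi (0:ℝ), (1 - cos q) * (ψ (1 / h) / ψ (q / h)) := by
  have hsubst := integral_comp_mul_right_Ioi' (fun q => (1 - cos q) / ψ (q / h)) 0 hh
  simp only [zero_mul, smul_eq_mul, mul_div_cancel_right₀ _ hh.ne'] at hsubst
  calc h * ψ (1 / h) * ((1 / π) * ∫ p in Ioi (0:ℝ), (1 - cos (p * h)) / ψ p)
      = (1 / π) * (ψ (1 / h) * ∫ q in Ioi (0:ℝ), (1 - cos q) / ψ (q / h)) := by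
        rw [← hsubst]; ring
    _ = (1 / π) * ∫ q in Ioi (0:ℝ), (1 - cos q) * (ψ (1 / h) / ψ (q / h)) := by
        rw [← integral_const_mul]
        congr 2 with q
        ring

theorem tendsto_one_sub_cos_mul_div {β : ℝ}
    (hRV : ∀ l, 0 < l → Tendsto (fun x => ψ (l * x) / ψ x) atTop (𝓝 (l ^ β))) {q : ℝ}
    (hq : 0 < q) :
    Tendsto (fun h => (1 - cos q) * (ψ (1 / h) / ψ (q / h))) (𝓝[>] 0)
      (𝓝 ((1 - cos q) / q ^ β)) := by
  have h := (((hRV q hq).comp tendsto_inv_nhdsGT_zero).inv₀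
    (rpow_pos_of_pos hq β).ne').const_mul (1 - cos q)
  simp only [Function.comp_def, inv_div, ← div_eq_mul_inv, one_div] at h ⊢
  exact h

theorem one_sub_cos_mul_div_le (hpos : ∀ p, p ≠ 0 → 0 < ψ p) {β ε X c C₀ : ℝ}
    (hpot : ∀ x, X ≤ x → ∀ l, 1 ≤ l →
      exp (-ε) * l ^ (β - ε) ≤ ψ (l * x) / ψ x ∧ ψ (l * x) / ψ x ≤ exp ε * l ^ (β + ε))
    (hc : 0 < c) (hsmall : ∀ p ∈ Ioc 0 X, c * p ^ 2 ≤ ψ p) (hC₀ : ∀ p, ψ p ≤ C₀ * p ^ 2)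
    {h q : ℝ} (hh : 0 < h) (hXh : X ≤ 1 / h) (hq : 0 < q) :
    (1 - cos q) * (ψ (1 / h) / ψ (q / h)) ≤
      (2 * exp ε + C₀ / c) * if q ≤ 1 then q ^ (2 - (β + ε)) + 1 else q ^ (-(β - ε)) := by
  have hC₀0 : 0 ≤ C₀ := by nlinarith [hpos 1 one_ne_zero, hC₀ 1]
  have hψq := hpos (q / h) (div_pos hq hh).ne'
  have hψ1 := hpos (1 / h) (one_div_pos.2 hh).ne'
  have hcos0 : 0 ≤ 1 - cos q := sub_nonneg.2 (cos_le_one q)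
  have hcos2 : 1 - cos q ≤ 2 := by linarith [neg_one_le_cos q]
  have hcosq : 1 - cos q ≤ q ^ 2 / 2 := by linarith [one_sub_sq_div_two_le_cos (x := q)]
  have hK : 0 ≤ C₀ / c := by positivity
  split_ifs with hq1
  · rcases le_or_gt X (q / h) with hXq | hXq
    · have hup := (hpot (q / h) hXq (1 / q) (one_le_one_div hq hq1)).2
      rw [show 1 / q * (q / h) = 1 / h by field_simp, one_div q, inv_rpow hq.le,
        ← rpow_neg hq.le] at hup
      calc (1 - cos q) * (ψ (1 / h) / ψ (q / h))
          ≤ q ^ 2 / 2 * (exp ε * q ^ (-(β + ε))) := by gcongr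
        _ = exp ε / 2 * q ^ (2 - (β + ε)) := by
          rw [sub_eq_add_neg, rpow_add hq, Real.rpow_two]; ring
        _ ≤ (2 * exp ε + C₀ / c) * (q ^ (2 - (β + ε)) + 1) := by
          have := rpow_pos_of_pos hq (2 - (β + ε))
          nlinarith [exp_pos ε]
    · have hsq := hsmall (q / h) ⟨by positivity, hXq.le⟩
      have hup : (1 - cos q) * ψ (1 / h) ≤ C₀ / c * (c * (q / h) ^ 2) / 2 := by
        calc (1 - cos q) * ψ (1 / h) ≤ q ^ 2 / 2 * (C₀ * (1 / h) ^ 2) := by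
              gcongr; exact hC₀ _
          _ = C₀ / c * (c * (q / h) ^ 2) / 2 := by field_simp
      have hr := rpow_pos_of_pos hq (2 - (β + ε))
      rw [← mul_div_assoc, div_le_iff₀ hψq]
      calc (1 - cos q) * ψ (1 / h) ≤ C₀ / c * (c * (q / h) ^ 2) / 2 := hup
        _ ≤ C₀ / c * ψ (q / h) := by nlinarith
        _ ≤ (2 * exp ε + C₀ / c) * (q ^ (2 - (β + ε)) + 1) * ψ (q / h) := by
          gcongr; nlinarith [exp_pos ε]
  · have hlow := (hpot (1 / h) hXh q (not_le.1 hq1).le).1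
    rw [show q * (1 / h) = q / h by ring] at hlow
    have hratio : ψ (1 / h) / ψ (q / h) ≤ exp ε * q ^ (-(β - ε)) := by
      calc ψ (1 / h) / ψ (q / h) = (ψ (q / h) / ψ (1 / h))⁻¹ := (inv_div _ _).symm
        _ ≤ (exp (-ε) * q ^ (β - ε))⁻¹ := inv_anti₀ (by positivity) hlow
        _ = exp ε * q ^ (-(β - ε)) := by rw [mul_inv, ← exp_neg, neg_neg, rpow_neg hq.le]
    calc (1 - cos q) * (ψ (1 / h) / ψ (q / h)) ≤ 2 * (exp ε * q ^ (-(β - ε))) := by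
          gcongr
      _ ≤ (2 * exp ε + C₀ / c) * q ^ (-(β - ε)) := by
          have := rpow_pos_of_pos hq (-(β - ε))
          nlinarith

theorem integrableOn_ite_rpow {a b : ℝ} (ha : -1 < a) (hb : b < -1) :
    IntegrableOn (fun q : ℝ => if q ≤ 1 then q ^ a + 1 else q ^ b) (Ioi 0) := by
  rw [← Ioc_union_Ioi_eq_Ioi zero_le_one]
  refine IntegrableOn.union ?_ ?_
  · refine (((intervalIntegral.intervalIntegrable_rpow' ha).1).add
      (integrableOn_const (C := (1:ℝ)) measure_Ioc_lt_top.ne)).congr_fun (fun q hq => ?_)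
      measurableSet_Ioc
    simp only [if_pos hq.2, Pi.add_apply]
  · refine (integrableOn_Ioi_rpow_of_lt hb one_pos).congr_fun (fun q (hq : 1 < q) => ?_)
      measurableSet_Ioi
    simp only [if_neg (not_le.2 hq)]

theorem tendsto_integral_one_sub_cos_mul_div (hmeas : Measurable ψ)
    (hpos : ∀ p, p ≠ 0 → 0 < ψ p)
    {β : ℝ} (hRV : ∀ l, 0 < l → Tendsto (fun x => ψ (l * x) / ψ x) atTop (𝓝 (l ^ β)))
    {ε X c C₀ : ℝ} (hβε : 1 < β - ε) (hβε' : β + ε < 3) (hX : 0 < X)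
    (hpot : ∀ x, X ≤ x → ∀ l, 1 ≤ l →
      exp (-ε) * l ^ (β - ε) ≤ ψ (l * x) / ψ x ∧ ψ (l * x) / ψ x ≤ exp ε * l ^ (β + ε))
    (hc : 0 < c) (hsmall : ∀ p ∈ Ioc 0 X, c * p ^ 2 ≤ ψ p) (hC₀ : ∀ p, ψ p ≤ C₀ * p ^ 2) :
    Tendsto (fun h => ∫ q in Ioi (0:ℝ), (1 - cos q) * (ψ (1 / h) / ψ (q / h))) (𝓝[>] 0)
      (𝓝 (∫ q in Ioi (0:ℝ), (1 - cos q) / q ^ β)) := by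
  refine tendsto_integral_filter_of_dominated_convergence _
    (Eventually.of_forall fun h => by fun_prop) ?_
    ((integrableOn_ite_rpow (a := 2 - (β + ε)) (b := -(β - ε)) (by linarith)
      (by linarith)).const_mul (2 * exp ε + C₀ / c))
    ((ae_restrict_mem measurableSet_Ioi).mono fun q hq => tendsto_one_sub_cos_mul_div hRV hq)
  filter_upwards [Ioo_mem_nhdsGT (one_div_pos.2 hX)] with h ⟨hh, hhX⟩
  filter_upwards [ae_restrict_mem measurableSet_Ioi] with q (hq : 0 < q)
  rw [Real.norm_of_nonneg (mul_nonneg (sub_nonneg.2 (cos_le_one q))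
    (div_nonneg (hpos _ (one_div_pos.2 hh).ne').le (hpos _ (div_pos hq hh).ne').le))]
  exact one_sub_cos_mul_div_le hpos hpot hc hsmall hC₀ hh ((le_one_div hX hh).2 hhX.le) hq

theorem integral_one_sub_cos_div_rpow (β : ℝ) :
    ∫ q in Ioi (0:ℝ), (1 - cos q) / q ^ β = 2 * ∫ p in Ioi (0:ℝ), sin (p / 2) ^ 2 / p ^ β := by
  rw [← integral_const_mul]
  congr 1 with p
  rw [sin_sq_eq_half_sub, mul_div_cancel₀ _ two_ne_zero]
  ring

theorem stmt_18_general
    (β : ℝ) (hβ1 : 1 < β) (hβ2 : β ≤ 2)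
    (ψ : ℝ → ℝ)
    (hmeas : Measurable ψ)
    (hpos : ∀ p : ℝ, p ≠ 0 → 0 < ψ p)
    (hRV : ∀ l : ℝ, 0 < l →
      Filter.Tendsto (fun x => ψ (l * x) / ψ x) Filter.atTop (nhds (l ^ β)))
    (hdiff1 : ∀ p : ℝ, 0 < p → DifferentiableAt ℝ ψ p)
    (D₁ : ℝ)
    (hD1 : ∀ l : ℝ, 1 ≤ l → l * |deriv ψ l| ≤ D₁ * ψ l)
    (C₀ : ℝ) (hC0 : ∀ p : ℝ, ψ p ≤ C₀ * p ^ 2)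
    (hliminf : 0 < Filter.liminf (fun p : ℝ => ψ p / p ^ 2) (nhdsWithin (0:ℝ) ({0}ᶜ))) :
    (∀ h : ℝ, 0 < h →
      MeasureTheory.IntegrableOn (fun s => pdens ψ s 0 - pdens ψ s h) (Set.Ioi (0:ℝ)) ∧
      (∫ s in Set.Ioi (0:ℝ), (pdens ψ s 0 - pdens ψ s h))
        = (1 / Real.pi) * ∫ p in Set.Ioi (0:ℝ), (1 - Real.cos (p * h)) / ψ p) ∧
    Filter.Tendsto
      (fun h : ℝ => h * ψ (1 / h) * ∫ s in Set.Ioi (0:ℝ), (pdens ψ s 0 - pdens ψ s h))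
      (nhdsWithin (0:ℝ) (Set.Ioi 0))
      (nhds ((2 / Real.pi) * ∫ p in Set.Ioi (0:ℝ), Real.sin (p / 2) ^ 2 / p ^ β)) := by
  obtain ⟨X, hX, hpot⟩ := exists_potter_bounds hpos hRV hdiff1 hD1 (ε := (β - 1) / 2) (by linarith)
  have hX0 : 0 < X := one_pos.trans_le hX
  obtain ⟨c₁, hc₁, hsmall⟩ := exists_pos_forall_Ioc_mul_sq_le hpos
    (fun p hp => (hdiff1 p hp).continuousAt.continuousWithinAt) hliminf X
  obtain ⟨c₂, hc₂, hlarge⟩ := exists_pos_forall_Ici_mul_rpow_le hpos hX0 (exp_pos _)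
    fun l hl => (hpot X le_rfl l hl).1
  have hpart1 := fun h => integrableOn_pdens_zero_sub_pdens_and_integral_eq hmeas hpos
    (fun s hs => integrableOn_exp_neg_mul_comp hmeas hpos hX (by linarith) hc₂ hlarge hs)
    (integrableOn_one_sub_cos_div hmeas hpos hX0 (by linarith) hc₁ hc₂ hsmall hlarge h)
  refine ⟨fun h _ => hpart1 h, ?_⟩
  have hlim := (tendsto_integral_one_sub_cos_mul_div hmeas hpos hRV (by linarith) (by linarith)
    hX0 hpot hc₁ hsmall hC0).const_mul (1 / π)
  rw [integral_one_sub_cos_div_rpow, ← mul_assoc, one_div_mul_eq_div] at hlim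
  refine hlim.congr' ?_
  filter_upwards [self_mem_nhdsWithin] with h (hh : 0 < h)
  rw [(hpart1 h).2, mul_integral_one_sub_cos_div_eq hh]

theorem stmt_18
    (β : ℝ) (hβ1 : 1 < β) (hβ2 : β ≤ 2)
    (ψ : ℝ → ℝ)
    (hmeas : Measurable ψ)
    (heven : ∀ p : ℝ, ψ (-p) = ψ p)
    (hnonneg : ∀ p : ℝ, 0 ≤ ψ p)
    (hpos : ∀ p : ℝ, p ≠ 0 → 0 < ψ p)
    (hRV : ∀ l : ℝ, 0 < l →
      Filter.Tendsto (fun x => ψ (l * x) / ψ x) Filter.atTop (nhds (l ^ β)))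
    (hdiff1 : ∀ p : ℝ, 0 < p → DifferentiableAt ℝ ψ p)
    (hdiff2 : ∀ p : ℝ, 0 < p → DifferentiableAt ℝ (deriv ψ) p)
    (D₁ D₂ : ℝ)
    (hD1 : ∀ l : ℝ, 1 ≤ l → l * |deriv ψ l| ≤ D₁ * ψ l)
    (hD2 : ∀ l : ℝ, 1 ≤ l → l ^ 2 * |deriv (deriv ψ) l| ≤ D₂ * ψ l)
    (hint1 : MeasureTheory.IntegrableOn (fun l : ℝ => (deriv ψ l) ^ 2) (Set.Ioc (0:ℝ) 1))
    (hint2 : MeasureTheory.IntegrableOn (fun l : ℝ => |deriv (deriv ψ) l|) (Set.Ioc (0:ℝ) 1))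
    (hint3 : MeasureTheory.IntegrableOn (fun l : ℝ => ψ l / l) (Set.Ioc (0:ℝ) 1))
    (C₀ : ℝ) (hC0 : ∀ p : ℝ, ψ p ≤ C₀ * p ^ 2)
    (hliminf : 0 < Filter.liminf (fun p : ℝ => ψ p / p ^ 2) (nhdsWithin (0:ℝ) ({0}ᶜ))) :
    (∀ h : ℝ, 0 < h →
      MeasureTheory.IntegrableOn (fun s => pdens ψ s 0 - pdens ψ s h) (Set.Ioi (0:ℝ)) ∧
      (∫ s in Set.Ioi (0:ℝ), (pdens ψ s 0 - pdens ψ s h))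
        = (1 / Real.pi) * ∫ p in Set.Ioi (0:ℝ), (1 - Real.cos (p * h)) / ψ p) ∧
    Filter.Tendsto
      (fun h : ℝ => h * ψ (1 / h) * ∫ s in Set.Ioi (0:ℝ), (pdens ψ s 0 - pdens ψ s h))
      (nhdsWithin (0:ℝ) (Set.Ioi 0))
      (nhds ((2 / Real.pi) * ∫ p in Set.Ioi (0:ℝ), Real.sin (p / 2) ^ 2 / p ^ β)) :=
  stmt_18_general β hβ1 hβ2 ψ hmeas hpos hRV hdiff1 D₁ hD1 C₀ hC0 hliminf
end

section
/- For every b ∈ (1, β) there exists a constant C < ∞ such that for all x ∈ ℝ, ∫₀³ p_r(x)^b dr ≤ C/(1 + x²). -/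
/-!
Regular variation of index `β > a` gives `ψ p ≥ c p ^ a` for large `p` (iterate the doubling
bound `ψ (2q) ≥ 2^a ψ q` from one dyadic block), so `e^{-u} ≤ C_k u^{-k}` yields
`|p_r(x)| ≤ B r^{-k}`, where `k a > 1 > k b`. Integrating by parts twice in `p` gives
`x² |p_r(x)| ≤ K` uniformly in `r ≤ 3`: the boundary terms vanish because `ψ'(0+)` exists
(`ψ''` is integrable near `0`) and must be `0` (`ψ ≤ C₀ p²`), and the bounds on `λψ'` and
`λ²ψ''` make `r²ψ'² e^{-rψ}` and `r|ψ''| e^{-rψ}` decay like `λ^{-2}`. Finally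
`(1 + x²)|p_r|^b ≤ |p_r|^{b-1}(|p_r| + x²|p_r|)` is bounded by a multiple of
`r^{-kb} + r^{-k(b-1)}`, which is integrable on `(0, 3]`.
-/

open Real MeasureTheory Set Filter Topology

lemma rpow_mul_exp_neg_le {u k : ℝ} (hu : 0 ≤ u) (hk : 0 < k) :
    u ^ k * exp (-u) ≤ k ^ k * exp (-k) := by
  have h := rpow_le_rpow (by positivity) (mul_exp_neg_le_exp_neg_one (u / k)) hk.le
  rw [mul_rpow (by positivity) (by positivity), ← exp_mul, ← exp_mul, div_rpow hu hk.le,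
    neg_one_mul, show -(u / k) * k = -u by field_simp, div_mul_eq_mul_div,
    div_le_iff₀ (by positivity)] at h
  linarith

lemma exp_neg_le_mul_rpow_neg {u k : ℝ} (hu : 0 < u) (hk : 0 < k) :
    exp (-u) ≤ k ^ k * exp (-k) * u ^ (-k) := by
  rw [rpow_neg hu.le, ← div_eq_mul_inv, le_div_iff₀ (by positivity), mul_comm]
  exact rpow_mul_exp_neg_le hu.le hk

lemma mul_mul_exp_neg_le {r y z q D : ℝ} (hr : 0 ≤ r) (hq : 0 < q) (hD : 0 ≤ D)
    (hzy : q * z ≤ D * y) : r * z * exp (-r * y) ≤ D / q := by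
  have hexp := mul_exp_neg_le_exp_neg_one (r * y)
  have hexp1 : exp (-1) ≤ 1 := exp_le_one_iff.2 (by norm_num)
  rw [le_div_iff₀ hq, neg_mul]
  calc r * z * exp (-(r * y)) * q = r * (q * z) * exp (-(r * y)) := by ring
    _ ≤ r * (D * y) * exp (-(r * y)) := by gcongr
    _ = D * (r * y * exp (-(r * y))) := by ring
    _ ≤ D := by nlinarith

lemma sq_mul_exp_neg_le {r y z q D : ℝ} (hr : 0 ≤ r) (hy : 0 ≤ y) (hq : 0 < q) (hz : 0 ≤ z)
    (hzy : q * z ≤ D * y) : (r * z) ^ 2 * exp (-r * y) ≤ 2 * D ^ 2 / q ^ 2 := by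
  have hexp : (r * y) ^ 2 * exp (-(r * y)) ≤ 2 := by
    have := Real.pow_div_factorial_le_exp (r * y) (by positivity) 2
    rw [exp_neg, ← div_eq_mul_inv, div_le_iff₀ (exp_pos _)]
    norm_num [Nat.factorial] at this
    linarith
  have hsq : (q * z) ^ 2 ≤ (D * y) ^ 2 := pow_le_pow_left₀ (by positivity) hzy 2
  rw [le_div_iff₀ (by positivity), neg_mul]
  calc (r * z) ^ 2 * exp (-(r * y)) * q ^ 2 = r ^ 2 * (q * z) ^ 2 * exp (-(r * y)) := by ring
    _ ≤ r ^ 2 * (D * y) ^ 2 * exp (-(r * y)) := by gcongr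
    _ = D ^ 2 * ((r * y) ^ 2 * exp (-(r * y))) := by ring
    _ ≤ D ^ 2 * 2 := by gcongr
    _ = 2 * D ^ 2 := by ring

lemma nonneg_of_mul_abs_le_mul {q z D y : ℝ} (hq : 0 ≤ q) (hy : 0 < y) (h : q * |z| ≤ D * y) :
    0 ≤ D :=
  nonneg_of_mul_nonneg_left ((mul_nonneg hq (abs_nonneg z)).trans h) hy

lemma one_add_sq_mul_rpow_le {u A K x b : ℝ} (hu : 0 ≤ u) (hA : u ≤ A) (hK : x ^ 2 * u ≤ K)
    (hb : 1 ≤ b) : (1 + x ^ 2) * u ^ b ≤ A ^ b + A ^ (b - 1) * K := by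
  have hsplit : ∀ v : ℝ, 0 ≤ v → v ^ b = v ^ (b - 1) * v := fun v hv => by
    conv_lhs => rw [← sub_add_cancel b 1]
    rw [rpow_add' hv (by linarith), rpow_one]
  rw [hsplit u hu, hsplit A (hu.trans hA)]
  have hpow : u ^ (b - 1) ≤ A ^ (b - 1) := rpow_le_rpow hu hA (by linarith)
  calc (1 + x ^ 2) * (u ^ (b - 1) * u) = u ^ (b - 1) * (u + x ^ 2 * u) := by ring
    _ ≤ A ^ (b - 1) * (A + K) := by gcongr; exact rpow_nonneg (hu.trans hA) _
    _ = A ^ (b - 1) * A + A ^ (b - 1) * K := by ring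

lemma exists_mul_rpow_le_of_doubling {g : ℝ → ℝ} {a M δ : ℝ} (hM : 0 < M) (ha : 0 ≤ a)
    (hδ : 0 < δ) (hblock : ∀ p ∈ Icc M (2 * M), δ ≤ g p)
    (hdouble : ∀ q, M ≤ q → 2 ^ a * g q ≤ g (2 * q)) :
    ∃ c, 0 < c ∧ ∀ p, M ≤ p → c * p ^ a ≤ g p := by
  set c := δ / (2 * M) ^ a
  have hbase : ∀ p ∈ Icc M (2 * M), c * p ^ a ≤ g p := fun p hp => calc
    c * p ^ a ≤ c * (2 * M) ^ a := by gcongr; exacts [hM.le.trans hp.1, hp.2]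
    _ = δ := div_mul_cancel₀ δ (by positivity)
    _ ≤ g p := hblock p hp
  have hdyadic : ∀ n : ℕ, ∀ p, M ≤ p → p ≤ 2 ^ n * M → c * p ^ a ≤ g p := by
    intro n
    induction n with
    | zero => exact fun p hMp hpM => hbase p ⟨hMp, by linarith⟩
    | succ n ih =>
      intro p hMp hpM
      rcases le_or_gt p (2 * M) with hp | hp
      · exact hbase p ⟨hMp, hp⟩
      · have hhalf := ih (p / 2) (by linarith) (by rw [pow_succ] at hpM; linarith)
        calc c * p ^ a = 2 ^ a * (c * (p / 2) ^ a) := by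
              rw [div_rpow (by linarith) zero_le_two]
              field_simp
          _ ≤ 2 ^ a * g (p / 2) := by gcongr
          _ ≤ g p := by simpa [mul_div_cancel₀] using hdouble (p / 2) (by linarith)
  refine ⟨c, by positivity, fun p hp => ?_⟩
  obtain ⟨n, hn⟩ := pow_unbounded_of_one_lt (p / M) one_lt_two
  exact hdyadic n p hp ((div_le_iff₀ hM).1 hn.le)

lemma exists_mul_rpow_le_of_tendsto_div {ψ : ℝ → ℝ} {a β : ℝ} (hcont : ContinuousOn ψ (Ioi 0))
    (hpos : ∀ p, 0 < p → 0 < ψ p)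
    (hRV : Tendsto (fun x => ψ (2 * x) / ψ x) atTop (𝓝 (2 ^ β))) (ha : 0 ≤ a) (haβ : a < β) :
    ∃ M c, 0 < M ∧ 0 < c ∧ ∀ p, M ≤ p → c * p ^ a ≤ ψ p := by
  obtain ⟨M₀, hM₀⟩ := eventually_atTop.1 <|
    hRV.eventually (eventually_gt_nhds (rpow_lt_rpow_of_exponent_lt one_lt_two haβ))
  set M := max M₀ 1
  have hM : 0 < M := zero_lt_one.trans_le (le_max_right _ _)
  have hdouble : ∀ q, M ≤ q → 2 ^ a * ψ q ≤ ψ (2 * q) := fun q hq =>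
    ((lt_div_iff₀ (hpos q (hM.trans_le hq))).1 (hM₀ q ((le_max_left _ _).trans hq))).le
  obtain ⟨p₀, hp₀, hmin⟩ := (isCompact_Icc (a := M) (b := 2 * M)).exists_isMinOn
    (nonempty_Icc.2 (by linarith)) (hcont.mono fun p hp => hM.trans_le hp.1)
  obtain ⟨c, hc, hle⟩ := exists_mul_rpow_le_of_doubling hM ha (hpos p₀ (hM.trans_le hp₀.1))
    (fun p hp => hmin hp) hdouble
  exact ⟨M, c, hM, hc, hle⟩

lemma exists_tendsto_nhdsGT_of_integrableOn_deriv {g : ℝ → ℝ}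
    (hdiff : ∀ p, 0 < p → DifferentiableAt ℝ g p) (hint : IntegrableOn (deriv g) (Ioc 0 1)) :
    ∃ L, Tendsto g (𝓝[>] 0) (𝓝 L) := by
  have hint' : IntegrableOn (deriv g) (uIcc 0 1) := by
    rwa [uIcc_of_le zero_le_one, integrableOn_Icc_iff_integrableOn_Ioc]
  have hprim : Tendsto (fun y => ∫ t in y..1, deriv g t) (𝓝[>] 0)
      (𝓝 (∫ t in (0 : ℝ)..1, deriv g t)) := by
    have h := intervalIntegral.continuousOn_primitive_interval_left hint' 0 left_mem_uIcc
    rw [uIcc_of_le zero_le_one, ContinuousWithinAt, ← nhdsWithin_Ioc_eq_nhdsGT zero_lt_one] at *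
    exact h.mono_left (nhdsWithin_mono _ Ioc_subset_Icc_self)
  refine ⟨g 1 - ∫ t in (0 : ℝ)..1, deriv g t, (tendsto_const_nhds.sub hprim).congr' ?_⟩
  filter_upwards [Ioc_mem_nhdsGT zero_lt_one] with y hy
  rw [intervalIntegral.integral_eq_sub_of_hasDerivAt
    (fun t ht => (hdiff t (hy.1.trans_le (uIcc_of_le hy.2 ▸ ht).1)).hasDerivAt)
    ((intervalIntegrable_iff_integrableOn_Ioc_of_le hy.2).2
      (hint.mono_set (Ioc_subset_Ioc hy.1.le le_rfl)))]
  ring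

lemma eq_zero_of_tendsto_deriv_nhdsGT {f : ℝ → ℝ} {C L : ℝ}
    (hdiff : ∀ p, 0 < p → DifferentiableAt ℝ f p) (hC : ∀ p, 0 < p → |f p| ≤ C * p ^ 2)
    (hL : Tendsto (deriv f) (𝓝[>] 0) (𝓝 L)) : L = 0 := by
  have hlin : Tendsto (fun p : ℝ => C * p) (𝓝[>] 0) (𝓝 0) := by
    simpa using ((continuous_const_mul C).tendsto 0).mono_left nhdsWithin_le_nhds
  have hf0 : Tendsto f (𝓝[>] 0) (𝓝 0) := by
    refine squeeze_zero_norm' (eventually_nhdsWithin_of_forall hC) ?_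
    have hc : Continuous fun p : ℝ => C * p ^ 2 := by fun_prop
    simpa using (hc.tendsto 0).mono_left nhdsWithin_le_nhds
  have hquot : Tendsto (fun p => f p / p) (𝓝[>] 0) (𝓝 L) :=
    HasDerivAt.lhopital_zero_nhdsGT
      (eventually_nhdsWithin_of_forall fun p hp => (hdiff p hp).hasDerivAt)
      (Eventually.of_forall fun p => hasDerivAt_id p) (Eventually.of_forall fun _ => one_ne_zero)
      hf0 (tendsto_nhdsWithin_of_tendsto_nhds tendsto_id) (by simpa using hL)
  refine tendsto_nhds_unique hquot (squeeze_zero_norm' ?_ hlin)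
  filter_upwards [self_mem_nhdsWithin] with p (hp : 0 < p)
  rw [norm_div, Real.norm_eq_abs, Real.norm_of_nonneg hp.le, div_le_iff₀ hp]
  nlinarith [hC p hp]

lemma tendsto_deriv_nhdsGT_zero {ψ : ℝ → ℝ} {C : ℝ}
    (hdiff1 : ∀ p, 0 < p → DifferentiableAt ℝ ψ p)
    (hdiff2 : ∀ p, 0 < p → DifferentiableAt ℝ (deriv ψ) p)
    (hint2 : IntegrableOn (fun l => |deriv (deriv ψ) l|) (Ioc 0 1))
    (hC : ∀ p, 0 < p → |ψ p| ≤ C * p ^ 2) : Tendsto (deriv ψ) (𝓝[>] 0) (𝓝 0) := by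
  have hint : IntegrableOn (deriv (deriv ψ)) (Ioc 0 1) :=
    (integrable_norm_iff (measurable_deriv _).aestronglyMeasurable).1 hint2
  obtain ⟨L, hL⟩ := exists_tendsto_nhdsGT_of_integrableOn_deriv hdiff2 hint
  rwa [eq_zero_of_tendsto_deriv_nhdsGT hdiff1 hC hL] at hL

lemma integral_Ioi_of_hasDerivAt_of_tendsto_nhdsGT {f f' : ℝ → ℝ} {a l m : ℝ}
    (hderiv : ∀ x ∈ Ioi a, HasDerivAt f (f' x) x) (hint : IntegrableOn f' (Ioi a))
    (hl : Tendsto f (𝓝[>] a) (𝓝 l)) (hm : Tendsto f atTop (𝓝 m)) :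
    ∫ x in Ioi a, f' x = m - l := by
  classical
  have hne : ∀ x ∈ Ioi a, Function.update f a l x = f x := fun x hx =>
    Function.update_of_ne (ne_of_gt hx) _ _
  have h := integral_Ioi_of_hasDerivAt_of_tendsto (f := Function.update f a l)
    (by rwa [continuousWithinAt_update_same, Ici_sdiff_left])
    (fun x hx => (hderiv x hx).congr_of_eventuallyEq
      (eventually_of_mem (isOpen_Ioi.mem_nhds hx) hne))
    hint (hm.congr' (eventually_of_mem (Ioi_mem_atTop a) fun x hx => (hne x hx).symm))
  simpa using h

lemma integrableOn_cos_mul {g : ℝ → ℝ} {s : Set ℝ} (x : ℝ) (hg : IntegrableOn g s) :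
    IntegrableOn (fun p => cos (p * x) * g p) s :=
  hg.bdd_mul (c := 1) (by fun_prop) (Eventually.of_forall fun p => by
    simpa using abs_cos_le_one (p * x))

lemma integral_cos_mul_eq_neg_div_sq {f f' f'' : ℝ → ℝ} {x : ℝ} (hx : x ≠ 0)
    (hf : ∀ p ∈ Ioi 0, HasDerivAt f (f' p) p) (hf' : ∀ p ∈ Ioi 0, HasDerivAt f' (f'' p) p)
    (hbdd : IsBoundedUnder (· ≤ ·) (𝓝[>] 0) ((‖·‖) ∘ f)) (hf'0 : Tendsto f' (𝓝[>] 0) (𝓝 0))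
    (hftop : Tendsto f atTop (𝓝 0)) (hf'top : Tendsto f' atTop (𝓝 0))
    (hfi : IntegrableOn f (Ioi 0)) (hf''i : IntegrableOn f'' (Ioi 0)) :
    ∫ p in Ioi 0, cos (p * x) * f p = -(∫ p in Ioi 0, cos (p * x) * f'' p) / x ^ 2 := by
  set W : ℝ → ℝ := fun p => sin (p * x) / x * f p + cos (p * x) / x ^ 2 * f' p
  have hW : ∀ p ∈ Ioi 0, HasDerivAt W (cos (p * x) * f p + cos (p * x) * f'' p / x ^ 2) p := by
    intro p hp
    have hlin : HasDerivAt (fun q : ℝ => q * x) x p := hasDerivAt_mul_const x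
    refine ((((hlin.sin).div_const x).mul (hf p hp)).add
      (((hlin.cos).div_const (x ^ 2)).mul (hf' p hp))).congr_deriv ?_
    field_simp
    ring
  have hsin0 : Tendsto (fun p => sin (p * x) / x) (𝓝[>] 0) (𝓝 0) := by
    have hc : Continuous fun p : ℝ => sin (p * x) / x := by fun_prop
    simpa using (hc.tendsto 0).mono_left nhdsWithin_le_nhds
  have hcos : ∀ l : Filter ℝ, IsBoundedUnder (· ≤ ·) l ((‖·‖) ∘ fun p => cos (p * x) / x ^ 2) :=
    fun l => isBoundedUnder_of ⟨1 / x ^ 2, fun p => by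
      simpa [abs_div] using div_le_div_of_nonneg_right (abs_cos_le_one (p * x)) (sq_nonneg x)⟩
  have hsin : IsBoundedUnder (· ≤ ·) atTop ((‖·‖) ∘ fun p => sin (p * x) / x) :=
    isBoundedUnder_of ⟨1 / |x|, fun p => by
      simpa [abs_div] using div_le_div_of_nonneg_right (abs_sin_le_one (p * x)) (abs_nonneg x)⟩
  have h0 : Tendsto W (𝓝[>] 0) (𝓝 (0 + 0)) :=
    (hsin0.zero_mul_isBoundedUnder_le hbdd).add (isBoundedUnder_le_mul_tendsto_zero (hcos _) hf'0)
  have htop : Tendsto W atTop (𝓝 (0 + 0)) :=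
    (isBoundedUnder_le_mul_tendsto_zero hsin hftop).add
      (isBoundedUnder_le_mul_tendsto_zero (hcos _) hf'top)
  have hI := integrableOn_cos_mul x hfi
  have hI'' := (integrableOn_cos_mul x hf''i).div_const (x ^ 2)
  have hftc := integral_Ioi_of_hasDerivAt_of_tendsto_nhdsGT hW (hI.add hI'') h0 htop
  rw [integral_add hI hI'', integral_div] at hftc
  rw [neg_div, eq_neg_iff_add_eq_zero]
  simpa using hftc

lemma integrableOn_Ioi_ite_rpow {g : ℝ → ℝ} {M C e : ℝ} (hM : 0 < M) (he : e < -1)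
    (hg : IntegrableOn g (Ioc 0 M)) :
    IntegrableOn (fun p => if p ≤ M then g p else C * p ^ e) (Ioi 0) := by
  rw [← Ioc_union_Ioi_eq_Ioi hM.le]
  refine (hg.congr_fun (fun p hp => (if_pos hp.2).symm) measurableSet_Ioc).union ?_
  exact IntegrableOn.congr_fun ((integrableOn_Ioi_rpow_of_lt he hM).const_mul C)
    (fun p hp => (if_neg (not_le.2 hp)).symm) measurableSet_Ioi

lemma exp_neg_mul_le_rpow_mul_ite {y p M c a k r T : ℝ} (hy : 0 ≤ y) (hp : 0 < p)
    (hc : 0 < c) (hk : 0 < k) (hr : 0 < r) (hrT : r ≤ T) (hlb : M ≤ p → c * p ^ a ≤ y) :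
    exp (-r * y) ≤ r ^ (-k) *
      if p ≤ M then T ^ k else k ^ k * exp (-k) * c ^ (-k) * p ^ (-(k * a)) := by
  split_ifs with hpM
  · calc exp (-r * y) ≤ 1 := exp_le_one_iff.2 (by nlinarith)
      _ = r ^ (-k) * r ^ k := by rw [← rpow_add hr]; simp
      _ ≤ r ^ (-k) * T ^ k := by gcongr
  · have hcp : 0 < c * p ^ a := by positivity
    calc exp (-r * y) ≤ exp (-(r * (c * p ^ a))) := by
          gcongr
          rw [neg_mul, neg_le_neg_iff]
          exact mul_le_mul_of_nonneg_left (hlb (by linarith)) hr.le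
      _ ≤ k ^ k * exp (-k) * (r * (c * p ^ a)) ^ (-k) := exp_neg_le_mul_rpow_neg (by positivity) hk
      _ = _ := by
        rw [mul_rpow hr.le hcp.le, mul_rpow hc.le (by positivity), ← rpow_mul hp.le]
        ring_nf

lemma exists_integral_exp_neg_mul_le {ψ : ℝ → ℝ} {M c a k : ℝ} (T : ℝ) (hmeas : Measurable ψ)
    (hnonneg : ∀ p, 0 ≤ ψ p) (hM : 0 < M) (hc : 0 < c) (hk : 0 < k) (hka : 1 < k * a)
    (hlb : ∀ p, M ≤ p → c * p ^ a ≤ ψ p) :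
    ∃ B, ∀ r, 0 < r → r ≤ T → IntegrableOn (fun p => exp (-r * ψ p)) (Ioi 0) ∧
      ∫ p in Ioi 0, exp (-r * ψ p) ≤ B * r ^ (-k) := by
  set G : ℝ → ℝ := fun p =>
    if p ≤ M then T ^ k else k ^ k * exp (-k) * c ^ (-k) * p ^ (-(k * a))
  have hG : IntegrableOn G (Ioi 0) :=
    integrableOn_Ioi_ite_rpow hM (by linarith) (integrableOn_const measure_Ioc_lt_top.ne)
  refine ⟨∫ p in Ioi 0, G p, fun r hr hrT => ?_⟩
  have hle : ∀ p ∈ Ioi 0, ‖exp (-r * ψ p)‖ ≤ r ^ (-k) * G p := fun p hp => by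
    rw [norm_of_nonneg (exp_pos _).le]
    exact exp_neg_mul_le_rpow_mul_ite (hnonneg p) hp hc hk hr hrT (hlb p)
  have hint : IntegrableOn (fun p => exp (-r * ψ p)) (Ioi 0) :=
    (hG.const_mul _).mono' (by fun_prop) (ae_restrict_of_forall_mem measurableSet_Ioi hle)
  refine ⟨hint, ?_⟩
  calc ∫ p in Ioi 0, exp (-r * ψ p) ≤ ∫ p in Ioi 0, r ^ (-k) * G p :=
        setIntegral_mono_on hint (hG.const_mul _) measurableSet_Ioi fun p hp =>
          (le_abs_self _).trans (hle p hp)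
    _ = (∫ p in Ioi 0, G p) * r ^ (-k) := by rw [integral_const_mul, mul_comm]

lemma integrableOn_exp_neg_mul {ψ : ℝ → ℝ} {M c a r : ℝ} (hmeas : Measurable ψ)
    (hnonneg : ∀ p, 0 ≤ ψ p) (hM : 0 < M) (hc : 0 < c) (ha : 0 < a)
    (hlb : ∀ p, M ≤ p → c * p ^ a ≤ ψ p) (hr : 0 < r) :
    IntegrableOn (fun p => exp (-r * ψ p)) (Ioi 0) := by
  obtain ⟨B, hB⟩ := exists_integral_exp_neg_mul_le (k := 2 / a) r hmeas hnonneg hM hc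
    (by positivity) (by rw [div_mul_cancel₀ _ ha.ne']; norm_num) hlb
  exact (hB r hr le_rfl).1

lemma abs_pdens_le_integral {ψ : ℝ → ℝ} {r : ℝ} (x : ℝ)
    (hint : IntegrableOn (fun p => exp (-r * ψ p)) (Ioi 0)) :
    |pdens ψ r x| ≤ (∫ p in Ioi 0, exp (-r * ψ p)) / π := by
  rw [pdens, abs_mul, abs_of_pos (by positivity), one_div_mul_eq_div]
  gcongr
  rw [← Real.norm_eq_abs]
  refine norm_integral_le_of_norm_le hint (ae_of_all _ fun p => ?_)
  rw [norm_mul, norm_of_nonneg (exp_pos _).le]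
  exact mul_le_of_le_one_left (exp_pos _).le (abs_cos_le_one _)

lemma exists_abs_pdens_le_rpow {ψ : ℝ → ℝ} {M c a k : ℝ} (T : ℝ) (hmeas : Measurable ψ)
    (hnonneg : ∀ p, 0 ≤ ψ p) (hM : 0 < M) (hc : 0 < c) (hk : 0 < k) (hka : 1 < k * a)
    (hlb : ∀ p, M ≤ p → c * p ^ a ≤ ψ p) :
    ∃ B, ∀ r x, 0 < r → r ≤ T → |pdens ψ r x| ≤ B * r ^ (-k) := by
  obtain ⟨B, hB⟩ := exists_integral_exp_neg_mul_le T hmeas hnonneg hM hc hk hka hlb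
  refine ⟨B / π, fun r x hr hrT => (abs_pdens_le_integral x (hB r hr hrT).1).trans ?_⟩
  rw [div_mul_eq_mul_div]
  gcongr
  exact (hB r hr hrT).2

lemma abs_sub_mul_exp_neg_le_ite {y y₁ y₂ p r T D₁ D₂ : ℝ} (hy : 0 ≤ y) (hp : 0 < p)
    (hr : 0 < r) (hrT : r ≤ T) (hD₂ : 0 ≤ D₂) (h₁ : 1 ≤ p → p * |y₁| ≤ D₁ * y)
    (h₂ : 1 ≤ p → p ^ 2 * |y₂| ≤ D₂ * y) :
    |(r ^ 2 * y₁ ^ 2 - r * y₂) * exp (-r * y)| ≤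
      if p ≤ 1 then T ^ 2 * y₁ ^ 2 + T * |y₂| else (2 * D₁ ^ 2 + D₂) * p ^ (-2 : ℝ) := by
  have hexp : 0 < exp (-r * y) := exp_pos _
  have htri : |(r ^ 2 * y₁ ^ 2 - r * y₂) * exp (-r * y)| ≤
      (r * |y₁|) ^ 2 * exp (-r * y) + r * |y₂| * exp (-r * y) := by
    rw [abs_mul, abs_of_pos hexp, mul_pow, sq_abs, ← add_mul]
    gcongr
    exact (abs_sub _ _).trans_eq (by rw [abs_of_nonneg (by positivity), abs_mul, abs_of_pos hr])
  refine htri.trans ?_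
  split_ifs with hp1
  · have hexp1 : exp (-r * y) ≤ 1 := exp_le_one_iff.2 (by nlinarith)
    have h1 : (r * |y₁|) ^ 2 * exp (-r * y) ≤ T ^ 2 * y₁ ^ 2 := calc
      _ ≤ (r * |y₁|) ^ 2 := mul_le_of_le_one_right (by positivity) hexp1
      _ = r ^ 2 * y₁ ^ 2 := by rw [mul_pow, sq_abs]
      _ ≤ T ^ 2 * y₁ ^ 2 := by gcongr
    have h2 : r * |y₂| * exp (-r * y) ≤ T * |y₂| :=
      (mul_le_of_le_one_right (by positivity) hexp1).trans (by gcongr)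
    exact add_le_add h1 h2
  · have h1 := sq_mul_exp_neg_le hr.le hy hp (abs_nonneg y₁) (h₁ (not_le.1 hp1).le)
    have h2 := mul_mul_exp_neg_le hr.le (pow_pos hp 2) hD₂ (h₂ (not_le.1 hp1).le)
    rw [rpow_neg hp.le, rpow_two]
    calc _ ≤ 2 * D₁ ^ 2 / p ^ 2 + D₂ / p ^ 2 := add_le_add h1 h2
      _ = _ := by ring

lemma exists_integral_abs_second_deriv_le {ψ : ℝ → ℝ} {D₁ D₂ : ℝ} (T : ℝ)
    (hmeas : Measurable ψ) (hnonneg : ∀ p, 0 ≤ ψ p) (hD₂ : 0 ≤ D₂)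
    (hD1 : ∀ l : ℝ, 1 ≤ l → l * |deriv ψ l| ≤ D₁ * ψ l)
    (hD2 : ∀ l : ℝ, 1 ≤ l → l ^ 2 * |deriv (deriv ψ) l| ≤ D₂ * ψ l)
    (hint1 : IntegrableOn (fun l : ℝ => (deriv ψ l) ^ 2) (Ioc 0 1))
    (hint2 : IntegrableOn (fun l : ℝ => |deriv (deriv ψ) l|) (Ioc 0 1)) :
    ∃ K, ∀ r, 0 < r → r ≤ T →
      IntegrableOn (fun p => (r ^ 2 * deriv ψ p ^ 2 - r * deriv (deriv ψ) p) * exp (-r * ψ p))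
        (Ioi 0) ∧
      ∫ p in Ioi 0, |(r ^ 2 * deriv ψ p ^ 2 - r * deriv (deriv ψ) p) * exp (-r * ψ p)| ≤ K := by
  set G : ℝ → ℝ := fun p => if p ≤ 1 then T ^ 2 * deriv ψ p ^ 2 + T * |deriv (deriv ψ) p|
    else (2 * D₁ ^ 2 + D₂) * p ^ (-2 : ℝ)
  have hG : IntegrableOn G (Ioi 0) :=
    integrableOn_Ioi_ite_rpow one_pos (by norm_num) ((hint1.const_mul _).add (hint2.const_mul _))
  refine ⟨∫ p in Ioi 0, G p, fun r hr hrT => ?_⟩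
  have hle : ∀ p ∈ Ioi 0,
      ‖(r ^ 2 * deriv ψ p ^ 2 - r * deriv (deriv ψ) p) * exp (-r * ψ p)‖ ≤ G p := fun p hp =>
    abs_sub_mul_exp_neg_le_ite (hnonneg p) hp hr hrT hD₂ (hD1 p) (hD2 p)
  have hint : IntegrableOn
      (fun p => (r ^ 2 * deriv ψ p ^ 2 - r * deriv (deriv ψ) p) * exp (-r * ψ p)) (Ioi 0) :=
    hG.mono' (by fun_prop) (ae_restrict_of_forall_mem measurableSet_Ioi hle)
  exact ⟨hint, setIntegral_mono_on hint.abs hG measurableSet_Ioi hle⟩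

lemma pdens_eq_neg_integral_div {ψ : ℝ → ℝ} {D₁ r x : ℝ} (hx : x ≠ 0) (hr : 0 < r)
    (hnonneg : ∀ p, 0 ≤ ψ p) (hdiff1 : ∀ p : ℝ, 0 < p → DifferentiableAt ℝ ψ p)
    (hdiff2 : ∀ p : ℝ, 0 < p → DifferentiableAt ℝ (deriv ψ) p)
    (hψ'0 : Tendsto (deriv ψ) (𝓝[>] 0) (𝓝 0)) (hψtop : Tendsto ψ atTop atTop) (hD₁ : 0 ≤ D₁)
    (hD1 : ∀ l : ℝ, 1 ≤ l → l * |deriv ψ l| ≤ D₁ * ψ l)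
    (hfi : IntegrableOn (fun p => exp (-r * ψ p)) (Ioi 0))
    (hf''i : IntegrableOn
      (fun p => (r ^ 2 * deriv ψ p ^ 2 - r * deriv (deriv ψ) p) * exp (-r * ψ p)) (Ioi 0)) :
    pdens ψ r x = -(∫ p in Ioi 0,
      cos (p * x) * ((r ^ 2 * deriv ψ p ^ 2 - r * deriv (deriv ψ) p) * exp (-r * ψ p))) /
        (π * x ^ 2) := by
  have hf : ∀ p ∈ Ioi 0,
      HasDerivAt (fun q => exp (-r * ψ q)) (-r * deriv ψ p * exp (-r * ψ p)) p := fun p hp =>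
    (((hdiff1 p hp).hasDerivAt.const_mul (-r)).exp).congr_deriv (by ring)
  have hf' : ∀ p ∈ Ioi 0, HasDerivAt (fun q => -r * deriv ψ q * exp (-r * ψ q))
      ((r ^ 2 * deriv ψ p ^ 2 - r * deriv (deriv ψ) p) * exp (-r * ψ p)) p := fun p hp =>
    (((hdiff2 p hp).hasDerivAt.const_mul (-r)).mul (hf p hp)).congr_deriv (by ring)
  have hexp_le : ∀ p, ‖exp (-r * ψ p)‖ ≤ 1 := fun p => by
    rw [norm_of_nonneg (exp_pos _).le, exp_le_one_iff]
    nlinarith [hnonneg p]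
  have hbdd : ∀ l : Filter ℝ, IsBoundedUnder (· ≤ ·) l ((‖·‖) ∘ fun p => exp (-r * ψ p)) :=
    fun l => isBoundedUnder_of ⟨1, hexp_le⟩
  have hf'0 : Tendsto (fun p => -r * deriv ψ p * exp (-r * ψ p)) (𝓝[>] 0) (𝓝 0) := by
    have h := hψ'0.const_mul (-r)
    rw [mul_zero] at h
    exact h.zero_mul_isBoundedUnder_le (hbdd _)
  have hftop : Tendsto (fun p => exp (-r * ψ p)) atTop (𝓝 0) :=
    tendsto_exp_atBot.comp (hψtop.const_mul_atTop_of_neg (neg_lt_zero.2 hr))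
  have hf'top : Tendsto (fun p => -r * deriv ψ p * exp (-r * ψ p)) atTop (𝓝 0) := by
    refine squeeze_zero_norm' ?_ (tendsto_const_nhds.div_atTop tendsto_id (a := D₁))
    filter_upwards [eventually_ge_atTop 1] with p hp
    rw [norm_mul, norm_mul, norm_neg, norm_of_nonneg hr.le, norm_of_nonneg (exp_pos _).le]
    exact mul_mul_exp_neg_le hr.le (show 0 < p by linarith) hD₁ (hD1 p hp)
  rw [pdens, integral_cos_mul_eq_neg_div_sq hx hf hf' (hbdd _) hf'0 hftop hf'top hfi hf''i]
  ring

lemma exists_sq_mul_abs_pdens_le {ψ : ℝ → ℝ} {M c a D₁ D₂ : ℝ} (T : ℝ) (hmeas : Measurable ψ)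
    (hnonneg : ∀ p, 0 ≤ ψ p) (hdiff1 : ∀ p : ℝ, 0 < p → DifferentiableAt ℝ ψ p)
    (hdiff2 : ∀ p : ℝ, 0 < p → DifferentiableAt ℝ (deriv ψ) p)
    (hψ'0 : Tendsto (deriv ψ) (𝓝[>] 0) (𝓝 0)) (hM : 0 < M) (hc : 0 < c) (ha : 0 < a)
    (hlb : ∀ p, M ≤ p → c * p ^ a ≤ ψ p) (hD₁ : 0 ≤ D₁) (hD₂ : 0 ≤ D₂)
    (hD1 : ∀ l : ℝ, 1 ≤ l → l * |deriv ψ l| ≤ D₁ * ψ l)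
    (hD2 : ∀ l : ℝ, 1 ≤ l → l ^ 2 * |deriv (deriv ψ) l| ≤ D₂ * ψ l)
    (hint1 : IntegrableOn (fun l : ℝ => (deriv ψ l) ^ 2) (Ioc 0 1))
    (hint2 : IntegrableOn (fun l : ℝ => |deriv (deriv ψ) l|) (Ioc 0 1)) :
    ∃ K, ∀ r x, 0 < r → r ≤ T → x ^ 2 * |pdens ψ r x| ≤ K := by
  obtain ⟨K, hK⟩ := exists_integral_abs_second_deriv_le T hmeas hnonneg hD₂ hD1 hD2 hint1 hint2
  have hψtop : Tendsto ψ atTop atTop := tendsto_atTop_mono' _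
    ((eventually_ge_atTop M).mono hlb) ((tendsto_rpow_atTop ha).const_mul_atTop hc)
  refine ⟨K / π, fun r x hr hrT => ?_⟩
  obtain ⟨hint, hle⟩ := hK r hr hrT
  rcases eq_or_ne x 0 with rfl | hx
  · simpa using div_nonneg ((integral_nonneg fun p => abs_nonneg _).trans hle) pi_pos.le
  rw [pdens_eq_neg_integral_div hx hr hnonneg hdiff1 hdiff2 hψ'0 hψtop hD₁ hD1
    (integrableOn_exp_neg_mul hmeas hnonneg hM hc ha hlb hr) hint]
  set I := ∫ p in Ioi 0,
    cos (p * x) * ((r ^ 2 * deriv ψ p ^ 2 - r * deriv (deriv ψ) p) * exp (-r * ψ p))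
  have hI : |I| ≤ K := by
    rw [← Real.norm_eq_abs]
    refine (norm_integral_le_of_norm_le hint.abs (ae_of_all _ fun p => ?_)).trans hle
    rw [norm_mul, Real.norm_eq_abs]
    exact mul_le_of_le_one_left (abs_nonneg _) (abs_cos_le_one _)
  calc x ^ 2 * |-I / (π * x ^ 2)| = |I| / π := by
        rw [abs_div, abs_neg, abs_of_pos (by positivity : 0 < π * x ^ 2)]
        field_simp
    _ ≤ K / π := by gcongr

lemma intervalIntegral_le_div_of_mul_le {f Φ : ℝ → ℝ} {c T : ℝ} (hc : 0 < c) (hT : 0 ≤ T)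
    (hΦ : IntervalIntegrable Φ volume 0 T) (hΦ0 : ∀ r ∈ Icc 0 T, 0 ≤ Φ r)
    (hf : ∀ r ∈ Ioo 0 T, c * f r ≤ Φ r) : ∫ r in 0..T, f r ≤ (∫ r in 0..T, Φ r) / c := by
  by_cases hfi : IntervalIntegrable f volume 0 T
  · rw [← intervalIntegral.integral_div]
    exact intervalIntegral.integral_mono_on_of_le_Ioo hT hfi (hΦ.div_const c) fun r hr => by
      rw [le_div_iff₀' hc]; exact hf r hr
  · rw [intervalIntegral.integral_undef hfi]
    exact div_nonneg (intervalIntegral.integral_nonneg hT hΦ0) hc.le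

lemma intervalIntegrable_mul_rpow_neg_rpow {B k b T : ℝ} (hB : 0 ≤ B) (hkb : k * b < 1)
    (hT : 0 ≤ T) : IntervalIntegrable (fun r => (B * r ^ (-k)) ^ b) volume 0 T := by
  refine (intervalIntegrable_congr fun r hr => ?_).1
    ((intervalIntegral.intervalIntegrable_rpow' (r := -(k * b)) (by linarith)).const_mul (B ^ b))
  rw [uIoc_of_le hT] at hr
  rw [mul_rpow hB (rpow_nonneg hr.1.le _), ← rpow_mul hr.1.le, neg_mul]

lemma exists_intervalIntegral_rpow_le_div {u : ℝ → ℝ → ℝ} {B K k b T : ℝ} (hT : 0 < T)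
    (hb : 1 ≤ b) (hkb : k * b < 1) (hA : ∀ r x, 0 < r → r ≤ T → |u r x| ≤ B * r ^ (-k))
    (hK : ∀ r x, 0 < r → r ≤ T → x ^ 2 * |u r x| ≤ K) :
    ∃ C, ∀ x, ∫ r in 0..T, u r x ^ b ≤ C / (1 + x ^ 2) := by
  have hB : 0 ≤ B :=
    nonneg_of_mul_nonneg_left ((abs_nonneg _).trans (hA T 0 hT le_rfl)) (rpow_pos_of_pos hT _)
  have hK0 : 0 ≤ K := by simpa using hK T 0 hT le_rfl
  set Φ : ℝ → ℝ := fun r => (B * r ^ (-k)) ^ b + (B * r ^ (-k)) ^ (b - 1) * K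
  have hΦ : IntervalIntegrable Φ volume 0 T :=
    (intervalIntegrable_mul_rpow_neg_rpow hB hkb hT.le).add
      ((intervalIntegrable_mul_rpow_neg_rpow hB (by nlinarith) hT.le).mul_const K)
  refine ⟨∫ r in 0..T, Φ r, fun x => intervalIntegral_le_div_of_mul_le (by positivity) hT.le hΦ
    (fun r hr => ?_) (fun r hr => ?_)⟩
  · have : 0 ≤ B * r ^ (-k) := mul_nonneg hB (rpow_nonneg hr.1 _)
    positivity
  · calc (1 + x ^ 2) * u r x ^ b ≤ (1 + x ^ 2) * |u r x| ^ b :=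
          mul_le_mul_of_nonneg_left ((le_abs_self _).trans (abs_rpow_le_abs_rpow _ _))
            (by positivity)
      _ ≤ Φ r := one_add_sq_mul_rpow_le (abs_nonneg _) (hA r x hr.1 hr.2.le)
          (hK r x hr.1 hr.2.le) hb

theorem stmt_19_general
    (β : ℝ)
    (ψ : ℝ → ℝ)
    (hmeas : Measurable ψ)
    (hnonneg : ∀ p : ℝ, 0 ≤ ψ p)
    (hpos : ∀ p : ℝ, p ≠ 0 → 0 < ψ p)
    (hRV : ∀ l : ℝ, 0 < l →
      Filter.Tendsto (fun x => ψ (l * x) / ψ x) Filter.atTop (nhds (l ^ β)))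
    (hdiff1 : ∀ p : ℝ, 0 < p → DifferentiableAt ℝ ψ p)
    (hdiff2 : ∀ p : ℝ, 0 < p → DifferentiableAt ℝ (deriv ψ) p)
    (D₁ D₂ : ℝ)
    (hD1 : ∀ l : ℝ, 1 ≤ l → l * |deriv ψ l| ≤ D₁ * ψ l)
    (hD2 : ∀ l : ℝ, 1 ≤ l → l ^ 2 * |deriv (deriv ψ) l| ≤ D₂ * ψ l)
    (hint1 : MeasureTheory.IntegrableOn (fun l : ℝ => (deriv ψ l) ^ 2) (Set.Ioc (0:ℝ) 1))
    (hint2 : MeasureTheory.IntegrableOn (fun l : ℝ => |deriv (deriv ψ) l|) (Set.Ioc (0:ℝ) 1))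
    (C₀ : ℝ) (hC0 : ∀ p : ℝ, ψ p ≤ C₀ * p ^ 2) :
    ∀ b : ℝ, 1 < b → b < β → ∃ C : ℝ, ∀ x : ℝ,
      (∫ r in (0:ℝ)..3, pdens ψ r x ^ b) ≤ C / (1 + x ^ 2) := by
  intro b hb hbβ
  obtain ⟨a, hba, haβ⟩ := exists_between hbβ
  set k := 2 / (b + a)
  have hk : 0 < k := div_pos two_pos (by linarith)
  have hkb : k * b < 1 := by rw [div_mul_eq_mul_div, div_lt_one (by linarith)]; linarith
  have hka : 1 < k * a := by rw [div_mul_eq_mul_div, one_lt_div (by linarith)]; linarith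
  have hψpos : ∀ p, 0 < p → 0 < ψ p := fun p hp => hpos p hp.ne'
  have hD₁ := nonneg_of_mul_abs_le_mul zero_le_one (hψpos 1 one_pos) (hD1 1 le_rfl)
  have hD₂ := nonneg_of_mul_abs_le_mul (by norm_num) (hψpos 1 one_pos) (hD2 1 le_rfl)
  obtain ⟨M, c, hM, hc, hlb⟩ := exists_mul_rpow_le_of_tendsto_div
    (fun p hp => (hdiff1 p hp).continuousAt.continuousWithinAt) hψpos (hRV 2 two_pos)
    (by linarith) haβ
  have hψ'0 := tendsto_deriv_nhdsGT_zero hdiff1 hdiff2 hint2 (C := C₀) fun p _ =>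
    (abs_of_nonneg (hnonneg p)).trans_le (hC0 p)
  obtain ⟨B, hB⟩ := exists_abs_pdens_le_rpow 3 hmeas hnonneg hM hc hk hka hlb
  obtain ⟨K, hK⟩ := exists_sq_mul_abs_pdens_le 3 hmeas hnonneg hdiff1 hdiff2 hψ'0 hM hc
    (by linarith) hlb hD₁ hD₂ hD1 hD2 hint1 hint2
  exact exists_intervalIntegral_rpow_le_div three_pos hb.le hkb hB hK

theorem stmt_19
    (β : ℝ) (hβ1 : 1 < β) (hβ2 : β ≤ 2)
    (ψ : ℝ → ℝ)
    (hmeas : Measurable ψ)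
    (heven : ∀ p : ℝ, ψ (-p) = ψ p)
    (hnonneg : ∀ p : ℝ, 0 ≤ ψ p)
    (hpos : ∀ p : ℝ, p ≠ 0 → 0 < ψ p)
    (hRV : ∀ l : ℝ, 0 < l →
      Filter.Tendsto (fun x => ψ (l * x) / ψ x) Filter.atTop (nhds (l ^ β)))
    (hdiff1 : ∀ p : ℝ, 0 < p → DifferentiableAt ℝ ψ p)
    (hdiff2 : ∀ p : ℝ, 0 < p → DifferentiableAt ℝ (deriv ψ) p)
    (D₁ D₂ : ℝ)
    (hD1 : ∀ l : ℝ, 1 ≤ l → l * |deriv ψ l| ≤ D₁ * ψ l)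
    (hD2 : ∀ l : ℝ, 1 ≤ l → l ^ 2 * |deriv (deriv ψ) l| ≤ D₂ * ψ l)
    (hint1 : MeasureTheory.IntegrableOn (fun l : ℝ => (deriv ψ l) ^ 2) (Set.Ioc (0:ℝ) 1))
    (hint2 : MeasureTheory.IntegrableOn (fun l : ℝ => |deriv (deriv ψ) l|) (Set.Ioc (0:ℝ) 1))
    (hint3 : MeasureTheory.IntegrableOn (fun l : ℝ => ψ l / l) (Set.Ioc (0:ℝ) 1))
    (C₀ : ℝ) (hC0 : ∀ p : ℝ, ψ p ≤ C₀ * p ^ 2)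
    (hliminf : 0 < Filter.liminf (fun p : ℝ => ψ p / p ^ 2) (nhdsWithin (0:ℝ) ({0}ᶜ))) :
    ∀ b : ℝ, 1 < b → b < β → ∃ C : ℝ, ∀ x : ℝ,
      (∫ r in (0:ℝ)..3, pdens ψ r x ^ b) ≤ C / (1 + x ^ 2) :=
  stmt_19_general β ψ hmeas hnonneg hpos hRV hdiff1 hdiff2 D₁ D₂ hD1 hD2 hint1 hint2 C₀ hC0
end
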